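/- arXiv:2510.04163 — 2 statements merged into one kernel-verified Lean document; each statement's English description precedes it below -/
import Mathlib

section
/- Let M be a paving matroid of rank r on a finite ground set E, let H be a hyperplane of M with |H| ≥ r, and let M̃ be the relaxation of M at H. Let X, Y, X', Y' be bases of M, and suppose there exist elements a, s, b, t such that, setting X'' = (X \ {a}) ∪ {s} and Y'' = (Y \ {s}) ∪ {a} with a ∈ X \ Y and s ∈ Y \ X, and X' = (X'' \ {t}) ∪ {b} and Y' = (Y'' \ {b}) ∪ {t} with t ∈ X'' \ Y'' and b ∈ Y'' \ X'', the sets X'' and Y'' are bases of M̃ (so that (X,Y) → (X'',Y'') → (X',Y') is a 2-step exchange sequence in M̃). Then there exists an exchange sequence in M from (X,Y) to (X',Y'). -/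
open Set

namespace WhitePaving

variable {α : Type*}

/-- A single symmetric exchange step between two `n`-tuples of bases of the matroid `N`:
the tuples agree except in two positions `i ≠ j`, where `B i` is replaced by
`(B i \ {a}) ∪ {b}` and `B j` by `(B j \ {b}) ∪ {a}` for some `a ∈ B i \ B j` and
`b ∈ B j \ B i`, both resulting sets being bases of `N`. -/
def ExchStep (N : Matroid α) {n : ℕ} (B B' : Fin n → Set α) : Prop :=
  ∃ i j : Fin n, i ≠ j ∧ ∃ a b : α,
    a ∈ B i \ B j ∧ b ∈ B j \ B i ∧
    B' i = (B i \ {a}) ∪ {b} ∧ B' j = (B j \ {b}) ∪ {a} ∧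
    N.IsBase (B' i) ∧ N.IsBase (B' j) ∧
    ∀ k : Fin n, k ≠ i → k ≠ j → B' k = B k

/-- `seq` is an exchange sequence (of length `ℓ`) of `n`-tuples in the matroid `N`:
each tuple is obtained from the previous one by a symmetric exchange step. -/
def IsExchSeq (N : Matroid α) {n ℓ : ℕ} (seq : Fin (ℓ + 1) → Fin n → Set α) : Prop :=
  ∀ t : Fin ℓ, ExchStep N (seq t.castSucc) (seq t.succ)

/-- Two `n`-tuples are connected by some exchange sequence in `N`. -/
def ExchConnected (N : Matroid α) {n : ℕ} (B B' : Fin n → Set α) : Prop :=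
  ∃ (ℓ : ℕ) (seq : Fin (ℓ + 1) → Fin n → Set α),
    seq 0 = B ∧ seq (Fin.last ℓ) = B' ∧ IsExchSeq N seq

/-- Two `n`-tuples of sets have the same multiset union: each element appears in the
same number of coordinates of both. -/
def SameUnion {n : ℕ} (B B' : Fin n → Set α) : Prop :=
  ∀ e : α, Nat.card {i : Fin n // e ∈ B i} = Nat.card {i : Fin n // e ∈ B' i}

/-- White's conjecture in degree `n` for the matroid `N`: any two `n`-tuples of bases of `N`
with the same multiset union are connected by an exchange sequence in `N`. -/
def WhiteDeg (N : Matroid α) (n : ℕ) : Prop :=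
  ∀ B B' : Fin n → Set α, (∀ i, N.IsBase (B i)) → (∀ i, N.IsBase (B' i)) →
    SameUnion B B' → ExchConnected N B B'

/-- White's conjecture for the matroid `N`. -/
def White (N : Matroid α) : Prop := ∀ n : ℕ, 1 ≤ n → WhiteDeg N n

/-- `C` is a circuit of `M`: a minimal dependent subset of the ground set. -/
def IsCircuitP (M : Matroid α) (C : Set α) : Prop :=
  C ⊆ M.E ∧ ¬ M.Indep C ∧ ∀ x ∈ C, M.Indep (C \ {x})

/-- `M` has rank `r`: every base of `M` has exactly `r` elements. -/
def HasRank (M : Matroid α) (r : ℕ) : Prop :=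
  ∀ B, M.IsBase B → B.ncard = r

/-- `M` is paving: every circuit of `M` has size `r` or `r + 1`, where `r` is the rank. -/
def IsPavingP (M : Matroid α) : Prop :=
  ∀ C B, IsCircuitP M C → M.IsBase B → C.ncard = B.ncard ∨ C.ncard = B.ncard + 1

/-- `H` is a hyperplane of `M`: a maximal proper flat. -/
def IsHyperplaneP (M : Matroid α) (H : Set α) : Prop :=
  M.IsFlat H ∧ H ≠ M.E ∧ ∀ F, M.IsFlat F → H ⊂ F → F = M.E

/-- A hyperplane `H` of a rank-`r` matroid is stressed if every `r`-element
subset of `H` is a circuit. -/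
def IsStressedP (M : Matroid α) (r : ℕ) (H : Set α) : Prop :=
  IsHyperplaneP M H ∧ ∀ S ⊆ H, S.ncard = r → IsCircuitP M S

/-- `Mt` is the relaxation of the rank-`r` matroid `M` at the stressed hyperplane `H`:
a matroid on the same ground set whose bases are the bases of `M` together with the
`r`-element subsets of `H`. -/
def IsRelaxation (M Mt : Matroid α) (r : ℕ) (H : Set α) : Prop :=
  Mt.E = M.E ∧ ∀ B : Set α, (Mt.IsBase B ↔ (M.IsBase B ∨ (B ⊆ H ∧ B.ncard = r)))

/-- Deletion of the set `D` from the matroid `M`. -/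
def deleteP (M : Matroid α) (D : Set α) : Matroid α := Matroid.restrict M (M.E \ D)

/-- Contraction of the set `C` in the matroid `M`. -/
def contractP (M : Matroid α) (C : Set α) : Matroid α :=
  Matroid.dual (deleteP (Matroid.dual M) C)


/-! ### Auxiliary lemmas for the proof -/

section Aux

variable {M : Matroid α} {r : ℕ}

private lemma exists_circuit_aux (hfin : M.E.Finite) :
    ∀ n (S : Set α), S.ncard ≤ n → S ⊆ M.E → ¬ M.Indep S → ∃ C ⊆ S, IsCircuitP M C := by
  intro n
  induction n with
  | zero =>
    intro S hcard hSE hdep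
    have : S = ∅ := Set.ncard_eq_zero (hfin.subset hSE) |>.1 (Nat.le_zero.1 hcard)
    exact absurd (this ▸ M.empty_indep) hdep
  | succ n IH =>
    intro S hcard hSE hdep
    by_cases h : ∀ x ∈ S, M.Indep (S \ {x})
    · exact ⟨S, subset_rfl, hSE, hdep, h⟩
    · push_neg at h
      obtain ⟨x, hxS, hx⟩ := h
      have hc : (S \ {x}).ncard ≤ n := by
        have := Set.ncard_diff_singleton_add_one hxS (hfin.subset hSE)
        omega
      obtain ⟨C, hCS, hC⟩ := IH (S \ {x}) hc (diff_subset.trans hSE) hx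
      exact ⟨C, hCS.trans diff_subset, hC⟩

private lemma paving_indep (hfin : M.E.Finite) (hr : HasRank M r) (hpav : IsPavingP M)
    {S : Set α} (hSE : S ⊆ M.E) (hcard : S.ncard < r) : M.Indep S := by
  by_contra hdep
  obtain ⟨C, hCS, hC⟩ := exists_circuit_aux hfin S.ncard S le_rfl hSE hdep
  obtain ⟨B, hB⟩ := M.exists_isBase
  have h1 := hpav C B hC hB
  have h2 := hr B hB
  have h3 : C.ncard ≤ S.ncard := Set.ncard_le_ncard hCS (hfin.subset hSE)
  omega

private lemma base_of_indep_ncard (hfin : M.E.Finite) (hr : HasRank M r)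
    {S : Set α} (hS : M.Indep S) (hcard : S.ncard = r) : M.IsBase S := by
  obtain ⟨B, hB, hSB⟩ := hS.exists_isBase_superset
  have : S = B := Set.eq_of_subset_of_ncard_le hSB (by rw [hr B hB, hcard])
    (hfin.subset hB.subset_ground)
  rwa [this]

private lemma not_base_subset_closure (hr : HasRank M r) {B I : Set α}
    (hB : M.IsBase B) (hI : M.Indep I) (hIcard : I.ncard + 1 = r)
    (hsub : B ⊆ M.closure I) : False := by
  have h1 : M.E ⊆ M.closure I := by
    rw [← hB.closure_eq]
    exact M.closure_subset_closure_of_subset_closure hsub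
  have := hr I (hI.isBase_of_ground_subset_closure h1)
  omega

private lemma mem_closure_of_dep_insert {I : Set α} {x : α} (hI : M.Indep I) (hx : x ∈ M.E)
    (hdep : ¬ M.Indep (insert x I)) : x ∈ M.closure I := by
  by_cases hxI : x ∈ I
  · rw [insert_eq_of_mem hxI] at hdep; exact absurd hI hdep
  · rw [hI.mem_closure_iff_of_notMem hxI]
    exact ⟨hdep, insert_subset hx hI.subset_ground⟩

private lemma base_insert_of_not_mem_closure (hfin : M.E.Finite) (hr : HasRank M r)
    {I : Set α} {x : α} (hI : M.Indep I) (hIcard : I.ncard + 1 = r)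
    (hx : x ∈ M.E) (hxcl : x ∉ M.closure I) : M.IsBase (insert x I) := by
  have hxI : x ∉ I := fun h => hxcl (M.subset_closure I hI.subset_ground h)
  have hind : M.Indep (insert x I) :=
    (hI.insert_indep_iff_of_notMem hxI).2 ⟨hx, hxcl⟩
  refine base_of_indep_ncard hfin hr hind ?_
  rw [Set.ncard_insert_of_notMem hxI (hfin.subset hI.subset_ground)]
  omega

end Aux

/-! ### Combinators for exchange sequences -/

section Comb

private lemma exchStep_pair {N : Matroid α} {A B : Set α} {a b : α}
    (ha : a ∈ A \ B) (hb : b ∈ B \ A)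
    (h1 : N.IsBase ((A \ {a}) ∪ {b})) (h2 : N.IsBase ((B \ {b}) ∪ {a})) :
    ExchStep N ![A, B] ![(A \ {a}) ∪ {b}, (B \ {b}) ∪ {a}] := by
  refine ⟨0, 1, by decide, a, b, ?_, ?_, ?_, ?_, ?_, ?_, ?_⟩
  · simpa using ha
  · simpa using hb
  · simp
  · simp
  · simpa using h1
  · simpa using h2
  · intro k hk0 hk1
    fin_cases k
    · simp_all
    · simp_all

private lemma exchConnected_refl (N : Matroid α) {n : ℕ} (B : Fin n → Set α) :
    ExchConnected N B B :=
  ⟨0, fun _ => B, rfl, rfl, fun t => t.elim0⟩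

private lemma exchConnected_cons {N : Matroid α} {n : ℕ} {B B1 B2 : Fin n → Set α}
    (h : ExchStep N B B1) (hc : ExchConnected N B1 B2) : ExchConnected N B B2 := by
  obtain ⟨ℓ, seq, h0, hl, hseq⟩ := hc
  refine ⟨ℓ + 1, Fin.cases B seq, by simp, ?_, ?_⟩
  · rw [← Fin.succ_last]
    simp only [Fin.cases_succ]
    exact hl
  · intro t
    induction t using Fin.cases with
    | zero =>
      have e1 : (0 : Fin (ℓ + 1)).castSucc = 0 := rfl
      rw [e1]
      simp only [Fin.cases_succ, Fin.cases_zero]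
      rw [h0]
      exact h
    | succ i =>
      rw [← Fin.succ_castSucc]
      simp only [Fin.cases_succ]
      exact hseq i

private lemma exchStep_connected {N : Matroid α} {n : ℕ} {B B' : Fin n → Set α}
    (h : ExchStep N B B') : ExchConnected N B B' :=
  exchConnected_cons h (exchConnected_refl N B')

private def sw : Fin 2 → Fin 2 := ![1, 0]

private lemma sw_sw : ∀ k, sw (sw k) = k := by decide

private lemma exchStep_sw {N : Matroid α} {C C' : Fin 2 → Set α} (h : ExchStep N C C') :
    ExchStep N (C ∘ sw) (C' ∘ sw) := by
  obtain ⟨i, j, hij, a, b, h1, h2, h3, h4, h5, h6, h7⟩ := h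
  refine ⟨sw i, sw j, fun hh => hij (by rw [← sw_sw i, hh, sw_sw]), a, b,
    ?_, ?_, ?_, ?_, ?_, ?_, ?_⟩ <;>
    simp only [Function.comp_apply, sw_sw]
  · exact h1
  · exact h2
  · exact h3
  · exact h4
  · exact h5
  · exact h6
  · intro k hki hkj
    exact h7 (sw k) (fun hh => hki (by rw [← sw_sw k, hh]))
      (fun hh => hkj (by rw [← sw_sw k, hh]))

private lemma exchConnected_sw {N : Matroid α} {C C' : Fin 2 → Set α}
    (h : ExchConnected N C C') : ExchConnected N (C ∘ sw) (C' ∘ sw) := by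
  obtain ⟨ℓ, seq, h0, hl, hseq⟩ := h
  exact ⟨ℓ, fun u => (seq u) ∘ sw, congrArg (fun f => f ∘ sw) h0,
    congrArg (fun f => f ∘ sw) hl, fun t => exchStep_sw (hseq t)⟩

private lemma pair_comp_sw (A B : Set α) : (![A, B] : Fin 2 → Set α) ∘ sw = ![B, A] := by
  funext k; fin_cases k <;> rfl

private lemma exchConnected_swap_pair {N : Matroid α} {A B A' B' : Set α}
    (h : ExchConnected N ![B, A] ![B', A']) : ExchConnected N ![A, B] ![A', B'] := by
  have := exchConnected_sw h
  rwa [pair_comp_sw, pair_comp_sw] at this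

end Comb

/-! ### Set identities -/

section SetEq

variable {X Y : Set α} {a s t b c : α}

private lemma pE1 (haX : a ∈ X) (hsX : s ∉ X) : (((X \ {a}) ∪ {s}) \ {s}) ∪ {a} = X := by
  ext x; by_cases h1 : x = a <;> by_cases h2 : x = s <;> simp_all

private lemma pE3 (hsX : s ∉ X) : (((X \ {a}) ∪ {s}) \ {s}) ∪ {b} = (X \ {a}) ∪ {b} := by
  ext x; by_cases h1 : x = a <;> by_cases h2 : x = s <;> by_cases h3 : x = b <;> simp_all

private lemma pE4 (hsY : s ∈ Y) (hbs : b ≠ s) (hba : b ≠ a) :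
    (((Y \ {s}) ∪ {a}) \ {b}) ∪ {s} = (Y \ {b}) ∪ {a} := by
  ext x; by_cases h1 : x = a <;> by_cases h2 : x = s <;> by_cases h3 : x = b <;> simp_all

private lemma p2iiiX (haX : a ∈ X) (hta : t ≠ a) (hts : t ≠ s) :
    (((X \ {a}) ∪ {s}) \ {t}) ∪ {a} = (X \ {t}) ∪ {s} := by
  ext x; by_cases h1 : x = a <;> by_cases h2 : x = s <;> by_cases h3 : x = t <;> simp_all

private lemma p2iiiY (haY : a ∉ Y) : (((Y \ {s}) ∪ {a}) \ {a}) ∪ {t} = (Y \ {s}) ∪ {t} := by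
  ext x; by_cases h1 : x = a <;> by_cases h2 : x = s <;> by_cases h3 : x = t <;> simp_all

private lemma pE5 (htb : t ≠ b) (hts : t ≠ s) :
    (((X \ {a}) ∪ {b}) \ {t}) ∪ {s} = (((X \ {a}) ∪ {s}) \ {t}) ∪ {b} := by
  ext x; by_cases h1 : x = s <;> by_cases h2 : x = t <;> by_cases h3 : x = b <;> simp_all

private lemma pE6 (has : a ≠ s) (hab : a ≠ b) :
    (((Y \ {b}) ∪ {a}) \ {s}) ∪ {t} = (((Y \ {s}) ∪ {a}) \ {b}) ∪ {t} := by
  ext x; by_cases h1 : x = a <;> by_cases h2 : x = s <;> by_cases h3 : x = b <;>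
    by_cases h4 : x = t <;> simp_all

private lemma pE7 (has : a ≠ s) (hts : t ≠ s) :
    (((X \ {t}) ∪ {s}) \ {a}) ∪ {b} = (((X \ {a}) ∪ {s}) \ {t}) ∪ {b} := by
  ext x; by_cases h1 : x = a <;> by_cases h2 : x = s <;> by_cases h3 : x = t <;>
    by_cases h4 : x = b <;> simp_all

private lemma pE8 (htb : t ≠ b) (hab : a ≠ b) :
    (((Y \ {s}) ∪ {t}) \ {b}) ∪ {a} = (((Y \ {s}) ∪ {a}) \ {b}) ∪ {t} := by
  ext x; by_cases h1 : x = a <;> by_cases h2 : x = t <;> by_cases h3 : x = b <;> simp_all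

private lemma pEA1 (htX : t ∈ X) (hta : t ≠ a) :
    insert t (insert s ((X \ {a}) \ {t})) = (X \ {a}) ∪ {s} := by
  ext x; by_cases h1 : x = s <;> by_cases h2 : x = t <;> simp_all

private lemma pEA2 (haX : a ∈ X) (hta : t ≠ a) :
    insert a (insert s ((X \ {a}) \ {t})) = (X \ {t}) ∪ {s} := by
  ext x; by_cases h1 : x = s <;> by_cases h2 : x = t <;> by_cases h3 : x = a <;> simp_all

private lemma pEC1 (hbY : b ∈ Y) (hbc : b ≠ c) :
    insert b (insert a ((Y \ {b}) \ {c})) = (Y \ {c}) ∪ {a} := by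
  ext x; by_cases h1 : x = a <;> by_cases h2 : x = b <;> by_cases h3 : x = c <;> simp_all

private lemma pEC2 (hcY : c ∈ Y) (hcb : c ≠ b) :
    insert c (insert a ((Y \ {b}) \ {c})) = (Y \ {b}) ∪ {a} := by
  ext x; by_cases h1 : x = a <;> by_cases h2 : x = b <;> by_cases h3 : x = c <;> simp_all

private lemma pEC3 (hct : c ≠ t) :
    insert c (insert s ((X \ {a}) \ {t})) = (((X \ {a}) ∪ {c}) \ {t}) ∪ {s} := by
  ext x; by_cases h1 : x = s <;> by_cases h2 : x = t <;> by_cases h3 : x = c <;> simp_all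

private lemma pEC4 (hcY : c ∈ Y) (hcs : c ≠ s) :
    insert c (insert t ((Y \ {s}) \ {c})) = (Y \ {s}) ∪ {t} := by
  ext x; by_cases h1 : x = t <;> by_cases h2 : x = s <;> by_cases h3 : x = c <;> simp_all

private lemma pEC5 (has : a ≠ s) :
    insert a (insert t ((Y \ {s}) \ {c})) = (((Y \ {c}) ∪ {a}) \ {s}) ∪ {t} := by
  ext x; by_cases h1 : x = t <;> by_cases h2 : x = s <;> by_cases h3 : x = c <;>
    by_cases h4 : x = a <;> simp_all

private lemma pEC6 (hcX : c ∉ X) (hcs : c ≠ s) (hts : t ≠ s) :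
    (((((X \ {a}) ∪ {c}) \ {t}) ∪ {s}) \ {c}) ∪ {b} = (((X \ {a}) ∪ {s}) \ {t}) ∪ {b} := by
  ext x; by_cases h1 : x = s <;> by_cases h2 : x = t <;> by_cases h3 : x = c <;>
    by_cases h4 : x = b <;> simp_all

private lemma pEC7 (hcY : c ∈ Y) (hcs : c ≠ s) (hcb : c ≠ b) (htb : t ≠ b) (hab : a ≠ b)
    (has : a ≠ s) :
    (((((Y \ {c}) ∪ {a}) \ {s}) ∪ {t}) \ {b}) ∪ {c} = (((Y \ {s}) ∪ {a}) \ {b}) ∪ {t} := by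
  ext x; by_cases h1 : x = a <;> by_cases h2 : x = s <;> by_cases h3 : x = c <;>
    by_cases h4 : x = b <;> by_cases h5 : x = t <;> simp_all

end SetEq

/-! ### The core lemma: the dependent-`X''` case -/

private lemma core {M : Matroid α} {r : ℕ} (hfin : M.E.Finite) (hr : HasRank M r)
    (hpav : IsPavingP M)
    {X Y X' Y' : Set α} (hX : M.IsBase X) (hY : M.IsBase Y) (hX' : M.IsBase X') (hY' : M.IsBase Y')
    {a s t b : α} (ha : a ∈ X \ Y) (hs : s ∈ Y \ X)
    (hXdep : ¬ M.Indep ((X \ {a}) ∪ {s}))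
    (hY2 : M.IsBase ((Y \ {s}) ∪ {a}))
    (ht : t ∈ ((X \ {a}) ∪ {s}) \ ((Y \ {s}) ∪ {a}))
    (hb : b ∈ ((Y \ {s}) ∪ {a}) \ ((X \ {a}) ∪ {s}))
    (hX'eq : X' = (((X \ {a}) ∪ {s}) \ {t}) ∪ {b})
    (hY'eq : Y' = (((Y \ {s}) ∪ {a}) \ {b}) ∪ {t}) :
    ExchConnected M ![X, Y] ![X', Y'] := by
  have haX : a ∈ X := ha.1
  have haY : a ∉ Y := ha.2
  have hsY : s ∈ Y := hs.1
  have hsX : s ∉ X := hs.2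
  have has : a ≠ s := fun h => hsX (h ▸ haX)
  have hXE : X ⊆ M.E := hX.subset_ground
  have hYE : Y ⊆ M.E := hY.subset_ground
  have hXfin : X.Finite := hfin.subset hXE
  have hYfin : Y.Finite := hfin.subset hYE
  have hrX : X.ncard = r := hr X hX
  have hrY : Y.ncard = r := hr Y hY
  have haE : a ∈ M.E := hXE haX
  have hsE : s ∈ M.E := hYE hsY
  by_cases hts : t = s
  · subst hts
    by_cases hba : b = a
    · subst hba
      rw [hX'eq, hY'eq, pE1 haX hsX, pE1 hsY haY]
      exact exchConnected_refl M ![X, Y]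
    · have hbYs : b ∈ Y \ {t} := by
        rcases hb.1 with h | h
        · exact h
        · exact absurd h hba
      have hbY : b ∈ Y := hbYs.1
      have hbs : b ≠ t := hbYs.2
      have hbX : b ∉ X := fun hh => hb.2 (Or.inl ⟨hh, hba⟩)
      have hbbX : M.IsBase ((X \ {a}) ∪ {b}) := by
        rw [← pE3 hsX, ← hX'eq]; exact hX'
      have hbbY : M.IsBase ((Y \ {b}) ∪ {a}) := by
        rw [← pE4 hsY hbs hba, ← hY'eq]; exact hY'
      rw [hX'eq, hY'eq, pE3 hsX, pE4 hsY hbs hba]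
      exact exchStep_connected (exchStep_pair ha ⟨hbY, hbX⟩ hbbX hbbY)
  · have htXa : t ∈ X \ {a} := by
      rcases ht.1 with h | h
      · exact h
      · exact absurd h hts
    have htX : t ∈ X := htXa.1
    have hta : t ≠ a := htXa.2
    have htY : t ∉ Y := fun hh => ht.2 (Or.inl ⟨hh, hts⟩)
    have htE : t ∈ M.E := hXE htX
    by_cases hba : b = a
    · subst hba
      have hbbX : M.IsBase ((X \ {t}) ∪ {s}) := by
        rw [← p2iiiX haX hta hts, ← hX'eq]; exact hX'
      have hbbY : M.IsBase ((Y \ {s}) ∪ {t}) := by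
        rw [← p2iiiY haY, ← hY'eq]; exact hY'
      rw [hX'eq, hY'eq, p2iiiX haX hta hts, p2iiiY haY]
      exact exchStep_connected (exchStep_pair ⟨htX, htY⟩ hs hbbX hbbY)
    · have hbYs : b ∈ Y \ {s} := by
        rcases hb.1 with h | h
        · exact h
        · exact absurd h hba
      have hbY : b ∈ Y := hbYs.1
      have hbs : b ≠ s := hbYs.2
      have hbX : b ∉ X := fun hh => hb.2 (Or.inl ⟨hh, hba⟩)
      have hbE : b ∈ M.E := hYE hbY
      have hab : a ≠ b := fun h => hbX (h ▸ haX)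
      have htb : t ≠ b := fun h => hbX (h ▸ htX)
      -- facts about P := M.closure (X \ {a})
      have hIXa : M.Indep (X \ {a}) := hX.indep.subset diff_subset
      have hXacard : (X \ {a}).ncard + 1 = r := by
        have := Set.ncard_diff_singleton_add_one haX hXfin; omega
      have hsP : s ∈ M.closure (X \ {a}) := by
        refine mem_closure_of_dep_insert hIXa hsE ?_
        rw [union_singleton] at hXdep; exact hXdep
      have hXaP : X \ {a} ⊆ M.closure (X \ {a}) := M.subset_closure _ hIXa.subset_ground
      have htP : t ∈ M.closure (X \ {a}) := hXaP ⟨htX, hta⟩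
      have hX'P : ∀ x ∈ X', x = b ∨ x ∈ M.closure (X \ {a}) := by
        intro x hx
        rw [hX'eq] at hx
        rcases hx with ⟨h1, -⟩ | h2
        · rcases h1 with h | h
          · exact Or.inr (hXaP h)
          · refine Or.inr ?_; rw [show x = s from h]; exact hsP
        · exact Or.inl h2
      have hbP : b ∉ M.closure (X \ {a}) := by
        intro hbP
        refine not_base_subset_closure hr hX' hIXa hXacard (fun x hx => ?_)
        rcases hX'P x hx with h | h
        · rw [h]; exact hbP
        · exact h
      have hXB : M.IsBase ((X \ {a}) ∪ {b}) := by
        rw [union_singleton]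
        exact base_insert_of_not_mem_closure hfin hr hIXa hXacard hbE hbP
      have hIYb : M.Indep (Y \ {b}) := hY.indep.subset diff_subset
      have hYbcard : (Y \ {b}).ncard + 1 = r := by
        have := Set.ncard_diff_singleton_add_one hbY hYfin; omega
      by_cases hQ : a ∈ M.closure (Y \ {b})
      · -- routes A and c
        have haYb : a ∉ Y \ {b} := fun h => haY h.1
        have hdepQ : ¬ M.Indep ((Y \ {b}) ∪ {a}) := by
          rw [union_singleton]
          intro hind
          exact ((hIYb.insert_indep_iff_of_notMem haYb).1 hind).2 hQ
        have hIYs : M.Indep (Y \ {s}) := hY.indep.subset diff_subset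
        have hYscard : (Y \ {s}).ncard + 1 = r := by
          have := Set.ncard_diff_singleton_add_one hsY hYfin; omega
        -- the auxiliary independent set I4 = insert s ((X \ {a}) \ {t})
        have hsXat : s ∉ (X \ {a}) \ {t} := fun h => hsX h.1.1
        have hXatsub : insert s ((X \ {a}) \ {t}) ⊆ M.E :=
          insert_subset hsE ((diff_subset.trans diff_subset).trans hXE)
        have hXatcard : ((X \ {a}) \ {t}).ncard + 2 = r := by
          have := Set.ncard_diff_singleton_add_one htXa (hXfin.diff); omega
        have hI4card : (insert s ((X \ {a}) \ {t})).ncard + 1 = r := by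
          rw [Set.ncard_insert_of_notMem hsXat ((hXfin.diff).diff)]; omega
        have hI4 : M.Indep (insert s ((X \ {a}) \ {t})) :=
          paving_indep hfin hr hpav hXatsub (by omega)
        have htI4 : t ∈ M.closure (insert s ((X \ {a}) \ {t})) := by
          refine mem_closure_of_dep_insert hI4 htE ?_
          rw [pEA1 htX hta]; exact hXdep
        by_cases hR : t ∈ M.closure (Y \ {s})
        · -- the c-route
          have htYs : t ∉ Y \ {s} := fun h => htY h.1
          have hdepR : ¬ M.Indep ((Y \ {s}) ∪ {t}) := by
            rw [union_singleton]
            intro hind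
            exact ((hIYs.insert_indep_iff_of_notMem htYs).1 hind).2 hR
          have hex : ¬ ((Y \ {s}) \ {b} ⊆ M.closure (X \ {a})) := by
            intro hsub
            have hI2sub : insert t ((Y \ {s}) \ {b}) ⊆ M.E :=
              insert_subset htE ((diff_subset.trans diff_subset).trans hYE)
            have hYsbcard : ((Y \ {s}) \ {b}).ncard + 2 = r := by
              have := Set.ncard_diff_singleton_add_one
                (show b ∈ Y \ {s} from ⟨hbY, hbs⟩) (hYfin.diff)
              omega
            have htYsb : t ∉ (Y \ {s}) \ {b} := fun h => htY h.1.1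
            have hI2card : (insert t ((Y \ {s}) \ {b})).ncard + 1 = r := by
              rw [Set.ncard_insert_of_notMem htYsb ((hYfin.diff).diff)]; omega
            have hI2i : M.Indep (insert t ((Y \ {s}) \ {b})) :=
              paving_indep hfin hr hpav hI2sub (by omega)
            have hI2P : insert t ((Y \ {s}) \ {b}) ⊆ M.closure (X \ {a}) :=
              insert_subset htP hsub
            have hI2R : insert t ((Y \ {s}) \ {b}) ⊆ M.closure (Y \ {s}) :=
              insert_subset hR (diff_subset.trans (M.subset_closure _ hIYs.subset_ground))
            have hPI2 : M.closure (X \ {a}) ⊆ M.closure (insert t ((Y \ {s}) \ {b})) := by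
              by_contra hcon
              obtain ⟨e, heP, hecl⟩ := not_subset.1 hcon
              exact not_base_subset_closure hr
                (base_insert_of_not_mem_closure hfin hr hI2i hI2card
                  (M.closure_subset_ground _ heP) hecl)
                hIXa hXacard (insert_subset heP hI2P)
            have hRI2 : M.closure (Y \ {s}) ⊆ M.closure (insert t ((Y \ {s}) \ {b})) := by
              by_contra hcon
              obtain ⟨e, heP, hecl⟩ := not_subset.1 hcon
              exact not_base_subset_closure hr
                (base_insert_of_not_mem_closure hfin hr hI2i hI2card
                  (M.closure_subset_ground _ heP) hecl)
                hIYs hYscard (insert_subset heP hI2R)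
            have hsR : s ∈ M.closure (Y \ {s}) :=
              M.closure_subset_closure_of_subset_closure hI2R (hPI2 hsP)
            refine not_base_subset_closure hr hY hIYs hYscard (fun x hx => ?_)
            by_cases hxs : x = s
            · rw [hxs]; exact hsR
            · exact M.subset_closure _ hIYs.subset_ground ⟨hx, hxs⟩
          obtain ⟨c, hcYsb, hcP⟩ := not_subset.1 hex
          have hcY : c ∈ Y := hcYsb.1.1
          have hcs : c ≠ s := hcYsb.1.2
          have hcb : c ≠ b := hcYsb.2
          have hca : c ≠ a := fun h => haY (h ▸ hcY)
          have hcX : c ∉ X := fun h => hcP (hXaP ⟨h, hca⟩)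
          have hct : c ≠ t := fun h => htY (h ▸ hcY)
          have hcE : c ∈ M.E := hYE hcY
          have hB1X : M.IsBase ((X \ {a}) ∪ {c}) := by
            rw [union_singleton]
            exact base_insert_of_not_mem_closure hfin hr hIXa hXacard hcE hcP
          have hB1Y : M.IsBase ((Y \ {c}) ∪ {a}) := by
            by_contra hnb
            have hI3sub : insert a ((Y \ {b}) \ {c}) ⊆ M.E :=
              insert_subset haE ((diff_subset.trans diff_subset).trans hYE)
            have h1 : ((Y \ {b}) \ {c}).ncard + 2 = r := by
              have := Set.ncard_diff_singleton_add_one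
                (show c ∈ Y \ {b} from ⟨hcY, hcb⟩) (hYfin.diff)
              omega
            have haYbc : a ∉ (Y \ {b}) \ {c} := fun h => haY h.1.1
            have hI3card : (insert a ((Y \ {b}) \ {c})).ncard + 1 = r := by
              rw [Set.ncard_insert_of_notMem haYbc ((hYfin.diff).diff)]; omega
            have hI3i : M.Indep (insert a ((Y \ {b}) \ {c})) :=
              paving_indep hfin hr hpav hI3sub (by omega)
            have hbI3 : b ∉ insert a ((Y \ {b}) \ {c}) := by
              intro h
              rcases h with h | h
              · exact hab h.symm
              · exact h.1.2 rfl
            have hYccard : ((Y \ {c}) ∪ {a}).ncard = r := by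
              rw [← pEC1 hbY (fun h => hcb h.symm),
                Set.ncard_insert_of_notMem hbI3 (hfin.subset hI3sub)]
              omega
            have hdep1 : ¬ M.Indep ((Y \ {c}) ∪ {a}) :=
              fun hind => hnb (base_of_indep_ncard hfin hr hind hYccard)
            have hbI3c : b ∈ M.closure (insert a ((Y \ {b}) \ {c})) := by
              refine mem_closure_of_dep_insert hI3i hbE ?_
              rw [pEC1 hbY (fun h => hcb h.symm)]; exact hdep1
            have hcI3c : c ∈ M.closure (insert a ((Y \ {b}) \ {c})) := by
              refine mem_closure_of_dep_insert hI3i hcE ?_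
              rw [pEC2 hcY hcb]; exact hdepQ
            refine not_base_subset_closure hr hY hI3i hI3card (fun x hx => ?_)
            by_cases hxb : x = b
            · rw [hxb]; exact hbI3c
            by_cases hxc : x = c
            · rw [hxc]; exact hcI3c
            exact M.subset_closure _ hI3sub (Or.inr ⟨⟨hx, hxb⟩, hxc⟩)
          have hB2X : M.IsBase ((((X \ {a}) ∪ {c}) \ {t}) ∪ {s}) := by
            by_contra hnb
            have hcI4 : c ∉ insert s ((X \ {a}) \ {t}) := by
              intro h
              rcases h with h | h
              · exact hcs h
              · exact hcX h.1.1
            have hcard2 : ((((X \ {a}) ∪ {c}) \ {t}) ∪ {s}).ncard = r := by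
              rw [← pEC3 hct, Set.ncard_insert_of_notMem hcI4 (hfin.subset hXatsub)]; omega
            have hdep2 : ¬ M.Indep ((((X \ {a}) ∪ {c}) \ {t}) ∪ {s}) :=
              fun hind => hnb (base_of_indep_ncard hfin hr hind hcard2)
            have hcI4c : c ∈ M.closure (insert s ((X \ {a}) \ {t})) := by
              refine mem_closure_of_dep_insert hI4 hcE ?_
              rw [pEC3 hct]; exact hdep2
            exact hcP (M.closure_subset_closure_of_subset_closure
              (insert_subset hsP (diff_subset.trans hXaP)) hcI4c)
          have hB2Y : M.IsBase ((((Y \ {c}) ∪ {a}) \ {s}) ∪ {t}) := by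
            by_contra hnb
            have hI5sub : insert t ((Y \ {s}) \ {c}) ⊆ M.E :=
              insert_subset htE ((diff_subset.trans diff_subset).trans hYE)
            have h1 : ((Y \ {s}) \ {c}).ncard + 2 = r := by
              have := Set.ncard_diff_singleton_add_one
                (show c ∈ Y \ {s} from ⟨hcY, hcs⟩) (hYfin.diff)
              omega
            have htI5 : t ∉ (Y \ {s}) \ {c} := fun h => htY h.1.1
            have hI5card : (insert t ((Y \ {s}) \ {c})).ncard + 1 = r := by
              rw [Set.ncard_insert_of_notMem htI5 ((hYfin.diff).diff)]; omega
            have hI5i : M.Indep (insert t ((Y \ {s}) \ {c})) :=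
              paving_indep hfin hr hpav hI5sub (by omega)
            have hcI5c : c ∈ M.closure (insert t ((Y \ {s}) \ {c})) := by
              refine mem_closure_of_dep_insert hI5i hcE ?_
              rw [pEC4 hcY hcs]; exact hdepR
            have haI5 : a ∉ insert t ((Y \ {s}) \ {c}) := by
              intro h
              rcases h with h | h
              · exact hta h.symm
              · exact haY h.1.1
            have hcard3 : ((((Y \ {c}) ∪ {a}) \ {s}) ∪ {t}).ncard = r := by
              rw [← pEC5 has, Set.ncard_insert_of_notMem haI5 (hfin.subset hI5sub)]; omega
            have hdep3 : ¬ M.Indep ((((Y \ {c}) ∪ {a}) \ {s}) ∪ {t}) :=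
              fun hind => hnb (base_of_indep_ncard hfin hr hind hcard3)
            have haI5c : a ∈ M.closure (insert t ((Y \ {s}) \ {c})) := by
              refine mem_closure_of_dep_insert hI5i haE ?_
              rw [pEC5 has]; exact hdep3
            refine not_base_subset_closure hr hY' hI5i hI5card (fun x hx => ?_)
            rw [hY'eq] at hx
            rcases hx with ⟨h1x, -⟩ | h2x
            · rcases h1x with h | h
              · by_cases hxc : x = c
                · rw [hxc]; exact hcI5c
                · exact M.subset_closure _ hI5sub (Or.inr ⟨h, hxc⟩)
              · rw [show x = a from h]; exact haI5c
            · rw [show x = t from h2x]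
              exact M.subset_closure _ hI5sub (Or.inl rfl)
          -- assembling the three steps
          have step1 := exchStep_pair (N := M) ha ⟨hcY, hcX⟩ hB1X hB1Y
          have mt2 : t ∈ ((X \ {a}) ∪ {c}) \ ((Y \ {c}) ∪ {a}) := by
            refine ⟨Or.inl ⟨htX, hta⟩, ?_⟩
            rintro (⟨h, -⟩ | h)
            · exact htY h
            · exact hta h
          have ms2 : s ∈ ((Y \ {c}) ∪ {a}) \ ((X \ {a}) ∪ {c}) := by
            refine ⟨Or.inl ⟨hsY, fun h => hcs h.symm⟩, ?_⟩
            rintro (⟨h, -⟩ | h)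
            · exact hsX h
            · exact hcs (Eq.symm h)
          have step2 := exchStep_pair (N := M) mt2 ms2 hB2X hB2Y
          have mc3 : c ∈ ((((X \ {a}) ∪ {c}) \ {t}) ∪ {s}) \ ((((Y \ {c}) ∪ {a}) \ {s}) ∪ {t}) := by
            refine ⟨Or.inl ⟨Or.inr rfl, hct⟩, ?_⟩
            rintro (⟨(⟨-, h⟩ | h), -⟩ | h)
            · exact h rfl
            · exact hca h
            · exact hct h
          have mb3 : b ∈ ((((Y \ {c}) ∪ {a}) \ {s}) ∪ {t}) \ ((((X \ {a}) ∪ {c}) \ {t}) ∪ {s}) := by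
            refine ⟨Or.inl ⟨Or.inl ⟨hbY, fun h => hcb h.symm⟩, hbs⟩, ?_⟩
            rintro (⟨(⟨h, -⟩ | h), -⟩ | h)
            · exact hbX h
            · exact hcb (Eq.symm h)
            · exact hbs h
          have e6 : (((((X \ {a}) ∪ {c}) \ {t}) ∪ {s}) \ {c}) ∪ {b} = X' := by
            rw [pEC6 hcX hcs hts, ← hX'eq]
          have e7 : (((((Y \ {c}) ∪ {a}) \ {s}) ∪ {t}) \ {b}) ∪ {c} = Y' := by
            rw [pEC7 hcY hcs hcb htb hab has, ← hY'eq]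
          have hb3X : M.IsBase ((((((X \ {a}) ∪ {c}) \ {t}) ∪ {s}) \ {c}) ∪ {b}) := by
            rw [e6]; exact hX'
          have hb3Y : M.IsBase ((((((Y \ {c}) ∪ {a}) \ {s}) ∪ {t}) \ {b}) ∪ {c}) := by
            rw [e7]; exact hY'
          have step3 := exchStep_pair (N := M) mc3 mb3 hb3X hb3Y
          rw [e6, e7] at step3
          exact exchConnected_cons step1
            (exchConnected_cons step2 (exchStep_connected step3))
        · -- route A
          have hYA : M.IsBase ((Y \ {s}) ∪ {t}) := by
            rw [union_singleton]
            exact base_insert_of_not_mem_closure hfin hr hIYs hYscard htE hR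
          have hXA : M.IsBase ((X \ {t}) ∪ {s}) := by
            by_contra hnb
            have haI4 : a ∉ insert s ((X \ {a}) \ {t}) := by
              intro h
              rcases h with h | h
              · exact has h
              · exact h.1.2 rfl
            have hcardA : ((X \ {t}) ∪ {s}).ncard = r := by
              rw [← pEA2 haX hta, Set.ncard_insert_of_notMem haI4 (hfin.subset hXatsub)]
              omega
            have hdepA : ¬ M.Indep ((X \ {t}) ∪ {s}) :=
              fun hind => hnb (base_of_indep_ncard hfin hr hind hcardA)
            have haI4c : a ∈ M.closure (insert s ((X \ {a}) \ {t})) := by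
              refine mem_closure_of_dep_insert hI4 haE ?_
              rw [pEA2 haX hta]; exact hdepA
            refine not_base_subset_closure hr hX hI4 hI4card (fun x hx => ?_)
            by_cases hxa : x = a
            · rw [hxa]; exact haI4c
            by_cases hxt : x = t
            · rw [hxt]; exact htI4
            exact M.subset_closure _ hXatsub (Or.inr ⟨⟨hx, hxa⟩, hxt⟩)
          have step1 := exchStep_pair (N := M) ⟨htX, htY⟩ hs hXA hYA
          have ma2 : a ∈ ((X \ {t}) ∪ {s}) \ ((Y \ {s}) ∪ {t}) := by
            refine ⟨Or.inl ⟨haX, fun h => hta h.symm⟩, ?_⟩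
            rintro (⟨h, -⟩ | h)
            · exact haY h
            · exact hta (Eq.symm h)
          have mb2 : b ∈ ((Y \ {s}) ∪ {t}) \ ((X \ {t}) ∪ {s}) := by
            refine ⟨Or.inl ⟨hbY, hbs⟩, ?_⟩
            rintro (⟨h, -⟩ | h)
            · exact hbX h
            · exact hbs h
          have e7 : (((X \ {t}) ∪ {s}) \ {a}) ∪ {b} = X' := by
            rw [pE7 has hts, ← hX'eq]
          have e8 : (((Y \ {s}) ∪ {t}) \ {b}) ∪ {a} = Y' := by
            rw [pE8 htb hab, ← hY'eq]
          have hb2X : M.IsBase ((((X \ {t}) ∪ {s}) \ {a}) ∪ {b}) := by rw [e7]; exact hX'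
          have hb2Y : M.IsBase ((((Y \ {s}) ∪ {t}) \ {b}) ∪ {a}) := by rw [e8]; exact hY'
          have step2 := exchStep_pair (N := M) ma2 mb2 hb2X hb2Y
          rw [e7, e8] at step2
          exact exchConnected_cons step1 (exchStep_connected step2)
      · -- route B
        have hYB : M.IsBase ((Y \ {b}) ∪ {a}) := by
          rw [union_singleton]
          exact base_insert_of_not_mem_closure hfin hr hIYb hYbcard haE hQ
        have step1 := exchStep_pair (N := M) ha ⟨hbY, hbX⟩ hXB hYB
        have mt2 : t ∈ ((X \ {a}) ∪ {b}) \ ((Y \ {b}) ∪ {a}) := by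
          refine ⟨Or.inl ⟨htX, hta⟩, ?_⟩
          rintro (⟨h, -⟩ | h)
          · exact htY h
          · exact hta h
        have ms2 : s ∈ ((Y \ {b}) ∪ {a}) \ ((X \ {a}) ∪ {b}) := by
          refine ⟨Or.inl ⟨hsY, fun h => hbs h.symm⟩, ?_⟩
          rintro (⟨h, -⟩ | h)
          · exact hsX h
          · exact hbs (Eq.symm h)
        have e5 : (((X \ {a}) ∪ {b}) \ {t}) ∪ {s} = X' := by
          rw [pE5 htb hts, ← hX'eq]
        have e6 : (((Y \ {b}) ∪ {a}) \ {s}) ∪ {t} = Y' := by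
          rw [pE6 has hab, ← hY'eq]
        have hb2X : M.IsBase ((((X \ {a}) ∪ {b}) \ {t}) ∪ {s}) := by rw [e5]; exact hX'
        have hb2Y : M.IsBase ((((Y \ {b}) ∪ {a}) \ {s}) ∪ {t}) := by rw [e6]; exact hY'
        have step2 := exchStep_pair (N := M) mt2 ms2 hb2X hb2Y
        rw [e5, e6] at step2
        exact exchConnected_cons step1 (exchStep_connected step2)

/-- Degree-2 part of (*) for paving matroids: if two pairs of bases of a paving matroid
`M` are connected by a 2-step exchange sequence in the relaxation `Mt` of `M` at a
hyperplane `H` with `|H| ≥ r`, then they are connected by an exchange sequence in `M`. -/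
theorem star_deg2_paving (M Mt : Matroid α) (r : ℕ) (H : Set α)
    (hfin : M.E.Finite) (hr : HasRank M r) (hpav : IsPavingP M)
    (hH : IsHyperplaneP M H) (hHcard : r ≤ H.ncard)
    (hrel : IsRelaxation M Mt r H)
    (X Y X' Y' : Set α)
    (hX : M.IsBase X) (hY : M.IsBase Y) (hX' : M.IsBase X') (hY' : M.IsBase Y')
    (a s t b : α)
    (ha : a ∈ X \ Y) (hs : s ∈ Y \ X)
    (hX'' : Mt.IsBase ((X \ {a}) ∪ {s})) (hY'' : Mt.IsBase ((Y \ {s}) ∪ {a}))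
    (ht : t ∈ ((X \ {a}) ∪ {s}) \ ((Y \ {s}) ∪ {a}))
    (hb : b ∈ ((Y \ {s}) ∪ {a}) \ ((X \ {a}) ∪ {s}))
    (hX'eq : X' = (((X \ {a}) ∪ {s}) \ {t}) ∪ {b})
    (hY'eq : Y' = (((Y \ {s}) ∪ {a}) \ {b}) ∪ {t}) :
    ExchConnected M ![X, Y] ![X', Y'] := by
  obtain ⟨hE, hBiff⟩ := hrel
  obtain ⟨hFlat, hHne, -⟩ := hH
  have hHsub : H ⊆ M.E := hFlat.subset_ground
  have hnotbaseH : ∀ B, M.IsBase B → ¬ B ⊆ H := by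
    intro B hB hsub
    refine hHne (hHsub.antisymm ?_)
    calc M.E = M.closure B := hB.closure_eq.symm
      _ ⊆ M.closure H := M.closure_subset_closure hsub
      _ = H := hFlat.closure
  by_cases hXb : M.IsBase ((X \ {a}) ∪ {s})
  · by_cases hYb : M.IsBase ((Y \ {s}) ∪ {a})
    · -- both relaxed bases are bases of M : direct two-step sequence
      have step1 := exchStep_pair (N := M) ha hs hXb hYb
      have hbX2 : M.IsBase ((((X \ {a}) ∪ {s}) \ {t}) ∪ {b}) := by
        rw [← hX'eq]; exact hX'
      have hbY2 : M.IsBase ((((Y \ {s}) ∪ {a}) \ {b}) ∪ {t}) := by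
        rw [← hY'eq]; exact hY'
      have step2 := exchStep_pair (N := M) ht hb hbX2 hbY2
      rw [← hX'eq, ← hY'eq] at step2
      exact exchConnected_cons step1 (exchStep_connected step2)
    · -- Y'' is not a base of M : apply the core lemma with the roles swapped
      have hYdep : ¬ M.Indep ((Y \ {s}) ∪ {a}) := by
        intro hind
        have hcard : ((Y \ {s}) ∪ {a}).ncard = r := by
          rw [union_singleton, Set.ncard_insert_of_notMem (fun h => ha.2 h.1)
            ((hfin.subset hY.subset_ground).diff)]
          have h1 := Set.ncard_diff_singleton_add_one hs.1 (hfin.subset hY.subset_ground)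
          have h2 := hr Y hY
          omega
        exact hYb (base_of_indep_ncard hfin hr hind hcard)
      exact exchConnected_swap_pair
        (core hfin hr hpav hY hX hY' hX' hs ha hYdep hXb hb ht hY'eq hX'eq)
  · -- X'' is not a base of M : apply the core lemma directly
    have hXH : (X \ {a}) ∪ {s} ⊆ H := by
      rcases (hBiff _).1 hX'' with h | h
      · exact absurd h hXb
      · exact h.1
    have hYbase : M.IsBase ((Y \ {s}) ∪ {a}) := by
      rcases (hBiff _).1 hY'' with h | h
      · exact h
      · exfalso
        refine hnotbaseH X hX (fun x hx => ?_)
        by_cases hxa : x = a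
        · exact h.1 (Or.inr (by rw [hxa]; rfl))
        · exact hXH (Or.inl ⟨hx, hxa⟩)
    have hXdep : ¬ M.Indep ((X \ {a}) ∪ {s}) := by
      intro hind
      have hcard : ((X \ {a}) ∪ {s}).ncard = r := by
        rw [union_singleton, Set.ncard_insert_of_notMem (fun h => hs.2 h.1)
          ((hfin.subset hX.subset_ground).diff)]
        have h1 := Set.ncard_diff_singleton_add_one ha.1 (hfin.subset hX.subset_ground)
        have h2 := hr X hX
        omega
      exact hXb (base_of_indep_ncard hfin hr hind hcard)
    exact core hfin hr hpav hX hY hX' hY' ha hs hXdep hYbase ht hb hX'eq hY'eq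

end WhitePaving
end

section
/- Let M be a matroid of rank r on a finite ground set E with a stressed hyperplane H of size at least r, and let M̃ be the relaxation of M at H. Let (B_1,…,B_n) and (B'_1,…,B'_n) be two tuples of size-r subsets of E, each of type at most 1 (i.e., |B_i \ H| ≤ 1 and |B'_i \ H| ≤ 1 for all i), with the same multiset union. Then there exists an exchange sequence in M̃ transforming (B_1,…,B_n) into (B'_1,…,B'_n) such that every subset appearing in every intermediate tuple has type at most 1. -/
open Set

namespace WhitePaving

variable {α : Type*}

/-! ### Auxiliary machinery -/

section Aux

/-- The bundle of standing hypotheses. -/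
structure Ctx (M Mt : Matroid α) (r : ℕ) (H : Set α) : Prop where
  hfin : M.E.Finite
  hr : HasRank M r
  hH : IsStressedP M r H
  hHcard : r ≤ H.ncard
  hrel : IsRelaxation M Mt r H

/-- A "good" set: a size-`r` subset of the ground set of type at most one. -/
def Good (M : Matroid α) (r : ℕ) (H : Set α) (S : Set α) : Prop :=
  S ⊆ M.E ∧ S.ncard = r ∧ (S \ H).ncard ≤ 1

/-- A tuple of good sets. -/
def GoodT (M : Matroid α) (r : ℕ) (H : Set α) {n : ℕ} (B : Fin n → Set α) : Prop :=
  ∀ i, Good M r H (B i)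

/-- One legal exchange step landing on a good tuple. -/
def Rel (M Mt : Matroid α) (r : ℕ) (H : Set α) {n : ℕ} (B C : Fin n → Set α) : Prop :=
  ExchStep Mt B C ∧ GoodT M r H C

/-- Connectivity through good tuples. -/
def Conn (M Mt : Matroid α) (r : ℕ) (H : Set α) {n : ℕ} (B C : Fin n → Set α) : Prop :=
  Relation.ReflTransGen (Rel M Mt r H) B C

variable {M Mt : Matroid α} {r : ℕ} {H : Set α}

lemma Ctx.HsubE (c : Ctx M Mt r H) : H ⊆ M.E := c.hH.1.1.subset_ground

lemma Ctx.good_finite (c : Ctx M Mt r H) {S : Set α} (h : Good M r H S) : S.Finite :=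
  c.hfin.subset h.1

/-- Every good set is a base of the relaxation. -/
lemma Ctx.base_good (c : Ctx M Mt r H) {S : Set α} (h : Good M r H S) : Mt.IsBase S := by
  obtain ⟨hSE, hScard, hS1⟩ := h
  rw [c.hrel.2]
  by_cases hSH : S ⊆ H
  · exact Or.inr ⟨hSH, hScard⟩
  left
  obtain ⟨x, hxS, hxH⟩ : ∃ x, x ∈ S ∧ x ∉ H := by
    simpa [Set.subset_def] using hSH
  have hSfin : S.Finite := c.hfin.subset hSE
  have hr1 : 0 < r := hScard ▸ (Set.ncard_pos hSfin).2 ⟨x, hxS⟩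
  have hSH' : S \ H = {x} := by
    rw [Set.eq_singleton_iff_unique_mem]
    exact ⟨⟨hxS, hxH⟩, fun y hy => (Set.ncard_le_one (hSfin.diff)).1 hS1 y hy x ⟨hxS, hxH⟩⟩
  have hSx : S \ {x} ⊆ H := by
    intro y hy
    by_contra hyH
    have : y ∈ S \ H := ⟨hy.1, hyH⟩
    rw [hSH'] at this
    exact hy.2 this
  have hSxcard : (S \ {x}).ncard = r - 1 := by
    rw [Set.ncard_diff_singleton_of_mem hxS, hScard]
  have hindep : M.Indep (S \ {x}) := by
    obtain ⟨y, hyH, hyS⟩ : ∃ y, y ∈ H ∧ y ∉ S \ {x} := by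
      by_contra hcon
      push_neg at hcon
      have hsub : H ⊆ S \ {x} := hcon
      have h3 := Set.ncard_le_ncard hsub (hSfin.diff)
      rw [hSxcard] at h3
      have h4 := c.hHcard
      omega
    have hT : insert y (S \ {x}) ⊆ H := Set.insert_subset hyH hSx
    have hTcard : (insert y (S \ {x})).ncard = r := by
      rw [Set.ncard_insert_of_notMem hyS (hSfin.diff), hSxcard]
      omega
    have hcirc := c.hH.2 _ hT hTcard
    have := hcirc.2.2 y (Set.mem_insert _ _)
    rwa [Set.insert_diff_self_of_notMem hyS] at this
  have hxcl : x ∉ M.closure (S \ {x}) := by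
    intro hx
    exact hxH (c.hH.1.1.closure ▸ (M.closure_subset_closure hSx) hx)
  have hindepS : M.Indep S := by
    have h2 := (hindep.insert_indep_iff).2 (Or.inl ⟨hSE hxS, hxcl⟩)
    rwa [Set.insert_diff_singleton, Set.insert_eq_self.2 hxS] at h2
  obtain ⟨Bb, hBb, hSBb⟩ := hindepS.exists_isBase_superset
  have : S = Bb := Set.eq_of_subset_of_ncard_le hSBb
    (by rw [c.hr Bb hBb, hScard]) (c.hfin.subset hBb.subset_ground)
  rwa [this]

end Aux

section Count

variable {n : ℕ}

open Classical in
noncomputable def cnt (e : α) (B : Fin n → Set α) : Finset (Fin n) :=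
  Finset.univ.filter (fun i => e ∈ B i)

lemma mem_cnt {e : α} {B : Fin n → Set α} {i : Fin n} :
    i ∈ cnt e B ↔ e ∈ B i := by classical simp [cnt]

lemma natCard_eq_cnt (e : α) (B : Fin n → Set α) :
    Nat.card {i : Fin n // e ∈ B i} = (cnt e B).card := by
  classical
  rw [Nat.card_eq_fintype_card]
  simp [cnt, Fintype.card_subtype]

lemma sameUnion_iff_cnt {B B' : Fin n → Set α} :
    SameUnion B B' ↔ ∀ e, (cnt e B).card = (cnt e B').card := by
  simp [SameUnion, natCard_eq_cnt]

lemma SameUnion.symm {B B' : Fin n → Set α} (h : SameUnion B B') : SameUnion B' B :=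
  fun e => (h e).symm

lemma SameUnion.trans {B B' B'' : Fin n → Set α} (h : SameUnion B B')
    (h' : SameUnion B' B'') : SameUnion B B'' :=
  fun e => (h e).trans (h' e)

/-- From `e ∈ B i \ B' i`, find `j ≠ i` with `e ∈ B' j \ B j`. -/
lemma exists_flip {B B' : Fin n → Set α} (hU : SameUnion B B') {e : α} {i : Fin n}
    (h1 : e ∈ B i) (h2 : e ∉ B' i) : ∃ j, j ≠ i ∧ e ∈ B' j ∧ e ∉ B j := by
  classical
  have hc := (sameUnion_iff_cnt.1 hU) e
  by_contra hcon
  push_neg at hcon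
  have hsub : cnt e B' ⊆ cnt e B := by
    intro j hj
    rw [mem_cnt] at hj ⊢
    by_cases hji : j = i
    · exact absurd (hji ▸ hj) h2
    · by_contra hne; exact hne (hcon j hji hj)
  have heq : cnt e B' = cnt e B := Finset.eq_of_subset_of_card_le hsub hc.le
  exact h2 (mem_cnt.1 (heq ▸ (mem_cnt.2 h1)))

end Count

section Swap

variable {n : ℕ}

/-- The tuple obtained by exchanging `a ∈ B i` and `b ∈ B j`. -/
def swapT (B : Fin n → Set α) (i j : Fin n) (a b : α) : Fin n → Set α :=
  Function.update (Function.update B i ((B i \ {a}) ∪ {b})) j ((B j \ {b}) ∪ {a})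

variable {B : Fin n → Set α} {i j : Fin n} {a b : α}

lemma swapT_j : swapT B i j a b j = (B j \ {b}) ∪ {a} := by
  simp [swapT]

lemma swapT_i (hij : i ≠ j) : swapT B i j a b i = (B i \ {a}) ∪ {b} := by
  simp [swapT, Function.update_of_ne hij]

lemma swapT_k {k : Fin n} (hki : k ≠ i) (hkj : k ≠ j) : swapT B i j a b k = B k := by
  simp [swapT, Function.update_of_ne hkj, Function.update_of_ne hki]

lemma sameUnion_swapT (hij : i ≠ j) (ha : a ∈ B i \ B j) (hb : b ∈ B j \ B i) :
    SameUnion B (swapT B i j a b) := by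
  classical
  have hab : a ≠ b := fun h => hb.2 (h ▸ ha.1)
  rw [sameUnion_iff_cnt]
  intro e
  by_cases hea : e = a
  · subst hea
    have h1 : cnt e (swapT B i j e b) = insert j ((cnt e B).erase i) := by
      ext k
      rcases eq_or_ne k j with rfl | hkj
      · simp [mem_cnt, swapT_j, hab]
      rcases eq_or_ne k i with rfl | hki
      · simp [mem_cnt, swapT_i hij, hab, hij, Finset.mem_insert, hkj]
      · simp [mem_cnt, swapT_k hki hkj, Finset.mem_insert, hkj, hki]
    rw [h1, Finset.card_insert_of_notMem
        (by simp [mem_cnt, hb.2, Finset.mem_erase]; exact fun _ => ha.2),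
      Finset.card_erase_of_mem (mem_cnt.2 ha.1)]
    have : 0 < (cnt e B).card := Finset.card_pos.2 ⟨i, mem_cnt.2 ha.1⟩
    omega
  by_cases heb : e = b
  · subst heb
    have h1 : cnt e (swapT B i j a e) = insert i ((cnt e B).erase j) := by
      ext k
      rcases eq_or_ne k j with rfl | hkj
      · simp [mem_cnt, swapT_j, hij.symm, Ne.symm hab]
      rcases eq_or_ne k i with rfl | hki
      · simp [mem_cnt, swapT_i hij, Finset.mem_insert]
      · simp [mem_cnt, swapT_k hki hkj, Finset.mem_insert, hkj, hki]
    rw [h1, Finset.card_insert_of_notMem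
        (by simp [mem_cnt, ha.2, Finset.mem_erase]; exact fun _ => hb.2),
      Finset.card_erase_of_mem (mem_cnt.2 hb.1)]
    have : 0 < (cnt e B).card := Finset.card_pos.2 ⟨j, mem_cnt.2 hb.1⟩
    omega
  · congr 1
    ext k
    rcases eq_or_ne k j with rfl | hkj
    · simp [mem_cnt, swapT_j, hea, heb]
    rcases eq_or_ne k i with rfl | hki
    · simp [mem_cnt, swapT_i hij, hea, heb]
    · simp [mem_cnt, swapT_k hki hkj]

end Swap

section Color

lemma ncard_swap {X : Set α} {a b : α} (hX : X.Finite) (ha : a ∈ X) (hb : b ∉ X) :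
    ((X \ {a}) ∪ {b}).ncard = X.ncard := by
  rw [union_singleton, Set.ncard_exchange hb ha]

lemma color_le {X : Set α} {H : Set α} {a b : α} (hX : X.Finite)
    (hX1 : (X \ H).ncard ≤ 1) (hcase : b ∈ H ∨ X \ H ⊆ {a}) :
    (((X \ {a}) ∪ {b}) \ H).ncard ≤ 1 := by
  rcases hcase with hb | hXa
  · have hsub : ((X \ {a}) ∪ {b}) \ H ⊆ X \ H := by
      rintro x ⟨hx | hx, hxH⟩
      · exact ⟨hx.1, hxH⟩
      · exact absurd (hx ▸ hb) hxH
    exact le_trans (Set.ncard_le_ncard hsub (hX.diff)) hX1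
  · have hsub : ((X \ {a}) ∪ {b}) \ H ⊆ {b} := by
      rintro x ⟨hx | hx, hxH⟩
      · exact absurd (hXa ⟨hx.1, hxH⟩) hx.2
      · exact hx
    exact le_trans (Set.ncard_le_ncard hsub (finite_singleton b)) (by simp)

/-- The red part of the exchanged set, when both exchanged elements lie in `H`. -/
lemma red_swap {X : Set α} {H : Set α} {a b : α} (ha : a ∈ H) (hb : b ∈ H) :
    ((X \ {a}) ∪ {b}) \ H = X \ H := by
  ext x
  simp only [mem_diff, mem_union, mem_singleton_iff]
  constructor
  · rintro ⟨hx | hx, hxH⟩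
    · exact ⟨hx.1, hxH⟩
    · exact absurd (hx ▸ hb) hxH
  · rintro ⟨hx, hxH⟩
    exact ⟨Or.inl ⟨hx, fun h => hxH (h ▸ ha)⟩, hxH⟩

end Color

section StepLemma

variable {M Mt : Matroid α} {r : ℕ} {H : Set α} {n : ℕ} {B : Fin n → Set α}
  {i j : Fin n} {a b : α}

lemma Ctx.goodT_swapT (c : Ctx M Mt r H) (hg : GoodT M r H B)
    (hij : i ≠ j) (ha : a ∈ B i \ B j) (hb : b ∈ B j \ B i)
    (hci : (((B i \ {a}) ∪ {b}) \ H).ncard ≤ 1)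
    (hcj : (((B j \ {b}) ∪ {a}) \ H).ncard ≤ 1) :
    GoodT M r H (swapT B i j a b) := by
  intro k
  rcases eq_or_ne k j with rfl | hkj
  · rw [swapT_j]
    exact ⟨union_subset (diff_subset.trans (hg k).1) (by simpa using (hg i).1 ha.1),
      by rw [ncard_swap (c.good_finite (hg k)) hb.1 ha.2]; exact (hg k).2.1, hcj⟩
  rcases eq_or_ne k i with rfl | hki
  · rw [swapT_i hij]
    exact ⟨union_subset (diff_subset.trans (hg k).1) (by simpa using (hg j).1 hb.1),
      by rw [ncard_swap (c.good_finite (hg k)) ha.1 hb.2]; exact (hg k).2.1, hci⟩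
  · rw [swapT_k hki hkj]; exact hg k

lemma Ctx.rel_swapT (c : Ctx M Mt r H) (hg : GoodT M r H B)
    (hij : i ≠ j) (ha : a ∈ B i \ B j) (hb : b ∈ B j \ B i)
    (hci : (((B i \ {a}) ∪ {b}) \ H).ncard ≤ 1)
    (hcj : (((B j \ {b}) ∪ {a}) \ H).ncard ≤ 1) :
    Rel M Mt r H B (swapT B i j a b) := by
  have hgood := c.goodT_swapT hg hij ha hb hci hcj
  refine ⟨⟨i, j, hij, a, b, ha, hb, swapT_i hij, swapT_j, ?_, ?_,
    fun k hki hkj => swapT_k hki hkj⟩, hgood⟩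
  · exact c.base_good (hgood i)
  · exact c.base_good (hgood j)

lemma Ctx.conn_swapT (c : Ctx M Mt r H) (hg : GoodT M r H B)
    (hij : i ≠ j) (ha : a ∈ B i \ B j) (hb : b ∈ B j \ B i)
    (hci : (((B i \ {a}) ∪ {b}) \ H).ncard ≤ 1)
    (hcj : (((B j \ {b}) ∪ {a}) \ H).ncard ≤ 1) :
    Conn M Mt r H B (swapT B i j a b) :=
  Relation.ReflTransGen.single (c.rel_swapT hg hij ha hb hci hcj)

end StepLemma

section Helpers

variable {H : Set α}

lemma red_of_swap {X H : Set α} {a b : α} :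
    ((X \ {a}) ∪ {b}) \ H = ((X \ H) \ {a}) ∪ ({b} \ H) := by
  ext x
  simp only [mem_union, mem_diff, mem_singleton_iff]
  tauto

lemma red_singleton {X : Set α} {x : α} (h1 : (X \ H).ncard ≤ 1) (hfin : X.Finite)
    (hx : x ∈ X) (hxH : x ∉ H) : X \ H = {x} :=
  Set.eq_singleton_iff_unique_mem.2
    ⟨⟨hx, hxH⟩, fun y hy => (Set.ncard_le_one (hfin.diff)).1 h1 y hy x ⟨hx, hxH⟩⟩

lemma diff_nonempty' {s t : Set α} (hs : s.Finite) (ht : t.Finite)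
    (hcard : s.ncard = t.ncard) (h : (t \ s).Nonempty) : (s \ t).Nonempty := by
  refine (Set.ncard_pos (hs.diff)).1 ?_
  rw [(Set.ncard_eq_ncard_iff_ncard_diff_eq_ncard_diff hs ht).1 hcard]
  exact (Set.ncard_pos (ht.diff)).2 h

open Classical in
lemma mis_lt {n : ℕ} {B C B' : Fin n → Set α} (i : Fin n) (hi : B i \ H ≠ B' i \ H)
    (hnew : ∀ k, C k \ H ≠ B' k \ H → (B k \ H ≠ B' k \ H ∧ k ≠ i)) :
    (Finset.univ.filter fun k => C k \ H ≠ B' k \ H).card <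
      (Finset.univ.filter fun k => B k \ H ≠ B' k \ H).card := by
  apply Finset.card_lt_card
  constructor
  · intro k hk
    rw [Finset.mem_filter] at hk ⊢
    exact ⟨Finset.mem_univ _, (hnew k hk.2).1⟩
  · intro hsub
    have hiold : i ∈ Finset.univ.filter fun k => B k \ H ≠ B' k \ H := by
      rw [Finset.mem_filter]; exact ⟨Finset.mem_univ _, hi⟩
    have := hsub hiold
    rw [Finset.mem_filter] at this
    exact (hnew i this.2).2 rfl

end Helpers

section Phase1

variable {M Mt : Matroid α} {r : ℕ} {H : Set α}

open Classical in
lemma Ctx.phase1 (c : Ctx M Mt r H) {n : ℕ} {B' : Fin n → Set α} (hg' : GoodT M r H B') :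
    ∀ m (B : Fin n → Set α), GoodT M r H B → SameUnion B B' →
      (Finset.univ.filter fun k => B k \ H ≠ B' k \ H).card = m →
      ∃ C, Conn M Mt r H B C ∧ GoodT M r H C ∧ SameUnion C B' ∧
        ∀ i, C i \ H = B' i \ H := by
  classical
  intro m
  induction m using Nat.strong_induction_on with
  | _ m IH =>
  intro B hg hU hm
  by_cases h0 : ∀ k, B k \ H = B' k \ H
  · exact ⟨B, Relation.ReflTransGen.refl, hg, hU, h0⟩
  push_neg at h0
  obtain ⟨i, hi⟩ := h0
  by_cases hP1a : ∃ a, a ∈ B' i \ H ∧ a ∉ B i \ H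
  · -- Case P1a : the target has a red element `a` missing from `B i`
    obtain ⟨a, ha, haBH⟩ := hP1a
    have haBi : a ∉ B i := fun h => haBH ⟨h, ha.2⟩
    obtain ⟨j, hji, haBj, haB'j⟩ := exists_flip hU.symm ha.1 haBi
    have hij : i ≠ j := hji.symm
    have hredBj : B j \ H = {a} := red_singleton (hg j).2.2 (c.good_finite (hg j)) haBj ha.2
    have hredB'i : B' i \ H = {a} :=
      red_singleton (hg' i).2.2 (c.good_finite (hg' i)) ha.1 ha.2
    have hjold : B j \ H ≠ B' j \ H := by
      rw [hredBj]
      intro hcon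
      exact haB'j (show a ∈ B' j \ H by rw [← hcon]; rfl).1
    rcases (Set.ncard_le_one_iff_eq ((c.good_finite (hg i)).diff)).1 (hg i).2.2 with
      hempty | ⟨d, hd⟩
    · -- `B i` is all in `H`
      obtain ⟨b, hbBi, hbBj⟩ :=
        diff_nonempty' (c.good_finite (hg i)) (c.good_finite (hg j))
          (by rw [(hg i).2.1, (hg j).2.1]) ⟨a, haBj, haBi⟩
      have hbH : b ∈ H := by
        by_contra hcon
        exact absurd (show b ∈ (∅ : Set α) by rw [← hempty]; exact ⟨hbBi, hcon⟩) (notMem_empty _)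
      have redAtI : ((B i \ {b}) ∪ {a}) \ H = {a} := by
        rw [red_of_swap, hempty]
        ext x
        simp only [mem_union, mem_diff, mem_singleton_iff, empty_diff, notMem_empty,
          false_and, false_or, mem_empty_iff_false]
        exact ⟨fun h => h.1, fun h => ⟨h, h ▸ ha.2⟩⟩
      have redAtJ : ((B j \ {a}) ∪ {b}) \ H = ∅ := by
        rw [red_of_swap, hredBj]
        ext x
        simp only [mem_union, mem_diff, mem_singleton_iff, mem_empty_iff_false, iff_false]
        rintro (⟨h1, h2⟩ | ⟨h1, h2⟩)
        · exact h2 h1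
        · exact h2 (h1 ▸ hbH)
      have ha_ : b ∈ B i \ B j := ⟨hbBi, hbBj⟩
      have hb_ : a ∈ B j \ B i := ⟨haBj, haBi⟩
      have hci : (((B i \ {b}) ∪ {a}) \ H).ncard ≤ 1 := by rw [redAtI]; simp
      have hcj : (((B j \ {a}) ∪ {b}) \ H).ncard ≤ 1 := by rw [redAtJ]; simp
      have hlt := mis_lt (C := swapT B i j b a) i hi (by
        intro k hk
        rcases eq_or_ne k i with rfl | hki
        · rw [swapT_i hij, redAtI, hredB'i] at hk
          exact absurd rfl hk
        rcases eq_or_ne k j with rfl | hkj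
        · exact ⟨hjold, hki⟩
        · rw [swapT_k hki hkj] at hk
          exact ⟨hk, hki⟩)
      obtain ⟨C, hconn, hrest⟩ :=
        IH _ (hm ▸ hlt) (swapT B i j b a) (c.goodT_swapT hg hij ha_ hb_ hci hcj)
          ((sameUnion_swapT hij ha_ hb_).symm.trans hU) rfl
      exact ⟨C, (c.conn_swapT hg hij ha_ hb_ hci hcj).trans hconn, hrest⟩
    · -- `B i` has a red element `d`
      have hdBi : d ∈ B i := (show d ∈ B i \ H by rw [hd]; rfl).1
      have hdH : d ∉ H := (show d ∈ B i \ H by rw [hd]; rfl).2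
      have hdBj : d ∉ B j := by
        intro h
        have : d ∈ B j \ H := ⟨h, hdH⟩
        rw [hredBj] at this
        exact haBi (this ▸ hdBi)
      have redAtI : ((B i \ {d}) ∪ {a}) \ H = {a} := by
        rw [red_of_swap, hd]
        ext x
        simp only [mem_union, mem_diff, mem_singleton_iff]
        constructor
        · rintro (⟨h1, h2⟩ | ⟨h1, _⟩)
          · exact absurd h1 h2
          · exact h1
        · rintro rfl
          exact Or.inr ⟨rfl, ha.2⟩
      have redAtJ : ((B j \ {a}) ∪ {d}) \ H = {d} := by
        rw [red_of_swap, hredBj]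
        ext x
        simp only [mem_union, mem_diff, mem_singleton_iff]
        constructor
        · rintro (⟨h1, h2⟩ | ⟨h1, _⟩)
          · exact absurd h1 h2
          · exact h1
        · rintro rfl
          exact Or.inr ⟨rfl, hdH⟩
      have ha_ : d ∈ B i \ B j := ⟨hdBi, hdBj⟩
      have hb_ : a ∈ B j \ B i := ⟨haBj, haBi⟩
      have hci : (((B i \ {d}) ∪ {a}) \ H).ncard ≤ 1 := by rw [redAtI]; simp
      have hcj : (((B j \ {a}) ∪ {d}) \ H).ncard ≤ 1 := by rw [redAtJ]; simp
      have hlt := mis_lt (C := swapT B i j d a) i hi (by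
        intro k hk
        rcases eq_or_ne k i with rfl | hki
        · rw [swapT_i hij, redAtI, hredB'i] at hk
          exact absurd rfl hk
        rcases eq_or_ne k j with rfl | hkj
        · exact ⟨hjold, hki⟩
        · rw [swapT_k hki hkj] at hk
          exact ⟨hk, hki⟩)
      obtain ⟨C, hconn, hrest⟩ :=
        IH _ (hm ▸ hlt) (swapT B i j d a) (c.goodT_swapT hg hij ha_ hb_ hci hcj)
          ((sameUnion_swapT hij ha_ hb_).symm.trans hU) rfl
      exact ⟨C, (c.conn_swapT hg hij ha_ hb_ hci hcj).trans hconn, hrest⟩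
  · -- Case P1b : `B' i \ H ⊆ B i \ H`, so `B i` has a red element `d ∉ B' i`
    push_neg at hP1a
    obtain ⟨d, hdBiH, hdB'iH⟩ := Set.not_subset.1 (fun hsub => hi (hsub.antisymm hP1a))
    have hdBi : d ∈ B i := hdBiH.1
    have hdH : d ∉ H := hdBiH.2
    have hredBi : B i \ H = {d} := red_singleton (hg i).2.2 (c.good_finite (hg i)) hdBi hdH
    have hredB'i : B' i \ H = ∅ := by
      rcases (Set.ncard_le_one_iff_eq ((c.good_finite (hg' i)).diff)).1 (hg' i).2.2 with
        h | ⟨x, hx⟩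
      · exact h
      · exfalso
        have : x ∈ B i \ H := hP1a x (by rw [hx]; rfl)
        rw [hredBi] at this
        exact hdB'iH (this ▸ (by rw [hx]; rfl : x ∈ B' i \ H))
    have hdB'i : d ∉ B' i := fun h => hdB'iH ⟨h, hdH⟩
    obtain ⟨j, hji, hdB'j, hdBj⟩ := exists_flip hU hdBi hdB'i
    have hij : i ≠ j := hji.symm
    have hredB'j : B' j \ H = {d} :=
      red_singleton (hg' j).2.2 (c.good_finite (hg' j)) hdB'j hdH
    rcases (Set.ncard_le_one_iff_eq ((c.good_finite (hg j)).diff)).1 (hg j).2.2 with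
      hBjH | ⟨e, he⟩
    · -- `B j ⊆ H` : one swap fixes both coordinates
      obtain ⟨b, hbBj, hbBi⟩ :=
        diff_nonempty' (c.good_finite (hg j)) (c.good_finite (hg i))
          (by rw [(hg i).2.1, (hg j).2.1]) ⟨d, hdBi, hdBj⟩
      have hbH : b ∈ H := by
        by_contra hcon
        exact absurd (show b ∈ (∅ : Set α) by rw [← hBjH]; exact ⟨hbBj, hcon⟩) (notMem_empty _)
      have redAtI : ((B i \ {d}) ∪ {b}) \ H = ∅ := by
        rw [red_of_swap, hredBi]
        ext x
        simp only [mem_union, mem_diff, mem_singleton_iff, mem_empty_iff_false, iff_false]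
        rintro (⟨h1, h2⟩ | ⟨h1, h2⟩)
        · exact h2 h1
        · exact h2 (h1 ▸ hbH)
      have redAtJ : ((B j \ {b}) ∪ {d}) \ H = {d} := by
        rw [red_of_swap, hBjH]
        ext x
        simp only [mem_union, mem_diff, mem_singleton_iff, empty_diff, notMem_empty,
          false_and, false_or]
        exact ⟨fun h => h.1, fun h => ⟨h, h ▸ hdH⟩⟩
      have ha_ : d ∈ B i \ B j := ⟨hdBi, hdBj⟩
      have hb_ : b ∈ B j \ B i := ⟨hbBj, hbBi⟩
      have hci : (((B i \ {d}) ∪ {b}) \ H).ncard ≤ 1 := by rw [redAtI]; simp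
      have hcj : (((B j \ {b}) ∪ {d}) \ H).ncard ≤ 1 := by rw [redAtJ]; simp
      have hlt := mis_lt (C := swapT B i j d b) i hi (by
        intro k hk
        rcases eq_or_ne k i with rfl | hki
        · rw [swapT_i hij, redAtI, hredB'i] at hk
          exact absurd rfl hk
        rcases eq_or_ne k j with rfl | hkj
        · rw [swapT_j, redAtJ, hredB'j] at hk
          exact absurd rfl hk
        · rw [swapT_k hki hkj] at hk
          exact ⟨hk, hki⟩)
      obtain ⟨C, hconn, hrest⟩ :=
        IH _ (hm ▸ hlt) (swapT B i j d b) (c.goodT_swapT hg hij ha_ hb_ hci hcj)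
          ((sameUnion_swapT hij ha_ hb_).symm.trans hU) rfl
      exact ⟨C, (c.conn_swapT hg hij ha_ hb_ hci hcj).trans hconn, hrest⟩
    · -- `B j` has a red element `e` : swap the two red elements, fixing `j`
      have heBj : e ∈ B j := (show e ∈ B j \ H by rw [he]; rfl).1
      have heH : e ∉ H := (show e ∈ B j \ H by rw [he]; rfl).2
      have hed : e ≠ d := fun h => hdBj (h ▸ heBj)
      have heBi : e ∉ B i := by
        intro h
        have : e ∈ B i \ H := ⟨h, heH⟩
        rw [hredBi] at this
        exact hed this
      have hjold : B j \ H ≠ B' j \ H := by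
        rw [he, hredB'j]
        simp [hed]
      have redAtI : ((B i \ {d}) ∪ {e}) \ H = {e} := by
        rw [red_of_swap, hredBi]
        ext x
        simp only [mem_union, mem_diff, mem_singleton_iff]
        constructor
        · rintro (⟨h1, h2⟩ | ⟨h1, _⟩)
          · exact absurd h1 h2
          · exact h1
        · rintro rfl
          exact Or.inr ⟨rfl, heH⟩
      have redAtJ : ((B j \ {e}) ∪ {d}) \ H = {d} := by
        rw [red_of_swap, he]
        ext x
        simp only [mem_union, mem_diff, mem_singleton_iff]
        constructor
        · rintro (⟨h1, h2⟩ | ⟨h1, _⟩)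
          · exact absurd h1 h2
          · exact h1
        · rintro rfl
          exact Or.inr ⟨rfl, hdH⟩
      have ha_ : d ∈ B i \ B j := ⟨hdBi, hdBj⟩
      have hb_ : e ∈ B j \ B i := ⟨heBj, heBi⟩
      have hci : (((B i \ {d}) ∪ {e}) \ H).ncard ≤ 1 := by rw [redAtI]; simp
      have hcj : (((B j \ {e}) ∪ {d}) \ H).ncard ≤ 1 := by rw [redAtJ]; simp
      have hlt := mis_lt (C := swapT B i j d e) j hjold (by
        intro k hk
        rcases eq_or_ne k j with rfl | hkj
        · rw [swapT_j, redAtJ, hredB'j] at hk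
          exact absurd rfl hk
        rcases eq_or_ne k i with rfl | hki
        · exact ⟨hi, hij⟩
        · rw [swapT_k hki hkj] at hk
          exact ⟨hk, hkj⟩)
      obtain ⟨C, hconn, hrest⟩ :=
        IH _ (hm ▸ hlt) (swapT B i j d e) (c.goodT_swapT hg hij ha_ hb_ hci hcj)
          ((sameUnion_swapT hij ha_ hb_).symm.trans hU) rfl
      exact ⟨C, (c.conn_swapT hg hij ha_ hb_ hci hcj).trans hconn, hrest⟩

end Phase1

section Phase2

variable {M Mt : Matroid α} {r : ℕ} {H : Set α}

lemma target_diff {T X : Set α} {a b : α} (hb : b ∉ T) :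
    T \ ((X \ {b}) ∪ {a}) = (T \ X) \ {a} := by
  ext x
  simp only [mem_diff, mem_union, mem_singleton_iff, not_or, not_and, not_not]
  constructor
  · rintro ⟨hxT, h1, h2⟩
    exact ⟨⟨hxT, fun hx => hb ((h1 hx) ▸ hxT)⟩, h2⟩
  · rintro ⟨⟨hxT, hxX⟩, hxa⟩
    exact ⟨hxT, fun hx => absurd hx hxX, hxa⟩

lemma Ctx.fix0 (c : Ctx M Mt r H) {n : ℕ} {B' : Fin (n + 1) → Set α} (hg' : GoodT M r H B') :
    ∀ m (B : Fin (n + 1) → Set α), GoodT M r H B → SameUnion B B' →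
      (∀ i, B i \ H = B' i \ H) → (B' 0 \ B 0).ncard = m →
      ∃ C, Conn M Mt r H B C ∧ GoodT M r H C ∧ SameUnion C B' ∧
        (∀ i, C i \ H = B' i \ H) ∧ C 0 = B' 0 := by
  intro m
  induction m using Nat.strong_induction_on with
  | _ m IH =>
  intro B hg hU hred hm
  rcases Nat.eq_zero_or_pos m with rfl | hmpos
  · -- no difference: `B 0 = B' 0`
    have hsub : B' 0 ⊆ B 0 :=
      diff_eq_empty.1 ((Set.ncard_eq_zero ((c.good_finite (hg' 0)).diff)).1 hm)
    have : B' 0 = B 0 := Set.eq_of_subset_of_ncard_le hsub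
      (by rw [(hg 0).2.1, (hg' 0).2.1]) (c.good_finite (hg 0))
    exact ⟨B, Relation.ReflTransGen.refl, hg, hU, hred, this.symm⟩
  obtain ⟨a, ha0, haB0⟩ : (B' 0 \ B 0).Nonempty :=
    (Set.ncard_pos ((c.good_finite (hg' 0)).diff)).1 (hm ▸ hmpos)
  have haH : a ∈ H := by
    by_contra hcon
    exact haB0 (show a ∈ B 0 \ H by rw [hred 0]; exact ⟨ha0, hcon⟩).1
  obtain ⟨j, hj0, haBj, haB'j⟩ := exists_flip hU.symm ha0 haB0
  have h0j : (0 : Fin (n + 1)) ≠ j := hj0.symm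
  by_cases hcase1 : ∃ b, b ∈ B 0 \ B' 0 ∧ b ∉ B j
  · -- Case 1 : direct swap between coordinates 0 and j
    obtain ⟨b, ⟨hbB0, hbB'0⟩, hbBj⟩ := hcase1
    have hbH : b ∈ H := by
      by_contra hcon
      exact hbB'0 (show b ∈ B' 0 \ H by rw [← hred 0]; exact ⟨hbB0, hcon⟩).1
    have ha_ : b ∈ B 0 \ B j := ⟨hbB0, hbBj⟩
    have hb_ : a ∈ B j \ B 0 := ⟨haBj, haB0⟩
    have hci : (((B 0 \ {b}) ∪ {a}) \ H).ncard ≤ 1 := by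
      rw [red_swap hbH haH]; exact (hg 0).2.2
    have hcj : (((B j \ {a}) ∪ {b}) \ H).ncard ≤ 1 := by
      rw [red_swap haH hbH]; exact (hg j).2.2
    have hgD := c.goodT_swapT hg h0j ha_ hb_ hci hcj
    have hUD : SameUnion (swapT B 0 j b a) B' :=
      (sameUnion_swapT h0j ha_ hb_).symm.trans hU
    have hredD : ∀ i, swapT B 0 j b a i \ H = B' i \ H := by
      intro i
      rcases eq_or_ne i 0 with rfl | hi0
      · rw [swapT_i h0j, red_swap hbH haH]; exact hred _
      rcases eq_or_ne i j with rfl | hij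
      · rw [swapT_j, red_swap haH hbH]; exact hred _
      · rw [swapT_k hi0 hij]; exact hred _
    have hmlt : (B' 0 \ swapT B 0 j b a 0).ncard < m := by
      rw [swapT_i h0j, target_diff hbB'0,
        Set.ncard_diff_singleton_of_mem (show a ∈ B' 0 \ B 0 from ⟨ha0, haB0⟩)]
      omega
    obtain ⟨C, hconn, hrest⟩ := IH _ hmlt _ hgD hUD hredD rfl
    exact ⟨C, (c.conn_swapT hg h0j ha_ hb_ hci hcj).trans hconn, hrest⟩
  · push_neg at hcase1
    obtain ⟨b, hbB0, hbB'0⟩ : (B 0 \ B' 0).Nonempty :=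
      diff_nonempty' (c.good_finite (hg 0)) (c.good_finite (hg' 0))
        (by rw [(hg 0).2.1, (hg' 0).2.1]) ⟨a, ha0, haB0⟩
    have hbBj : b ∈ B j := hcase1 b ⟨hbB0, hbB'0⟩
    have hbH : b ∈ H := by
      by_contra hcon
      exact hbB'0 (show b ∈ B' 0 \ H by rw [← hred 0]; exact ⟨hbB0, hcon⟩).1
    have hab : a ≠ b := fun h => haB0 (h ▸ hbB0)
    obtain ⟨k, hk0, hbB'k, hbBk⟩ := exists_flip hU hbB0 hbB'0
    have hkj : k ≠ j := fun h => hbBk (h ▸ hbBj)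
    have h0k : (0 : Fin (n + 1)) ≠ k := hk0.symm
    by_cases hcase2 : ∃ cc, cc ∈ B k ∧ cc ∉ B j ∧ cc ∈ H
    · -- Case 2a : preparatory swap between j and k, then main swap between 0 and j
      obtain ⟨cc, hccBk, hccBj, hccH⟩ := hcase2
      have hccb : cc ≠ b := fun h => hbBk (h ▸ hccBk)
      have hjk : j ≠ k := hkj.symm
      have ha1 : b ∈ B j \ B k := ⟨hbBj, hbBk⟩
      have hb1 : cc ∈ B k \ B j := ⟨hccBk, hccBj⟩
      have hci1 : (((B j \ {b}) ∪ {cc}) \ H).ncard ≤ 1 := by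
        rw [red_swap hbH hccH]; exact (hg j).2.2
      have hcj1 : (((B k \ {cc}) ∪ {b}) \ H).ncard ≤ 1 := by
        rw [red_swap hccH hbH]; exact (hg k).2.2
      set D1 := swapT B j k b cc with hD1
      have hgD1 := c.goodT_swapT hg hjk ha1 hb1 hci1 hcj1
      have hUD1 : SameUnion D1 B' := (sameUnion_swapT hjk ha1 hb1).symm.trans hU
      have hredD1 : ∀ i, D1 i \ H = B' i \ H := by
        intro i
        rcases eq_or_ne i j with rfl | hij
        · rw [hD1, swapT_i hjk, red_swap hbH hccH]; exact hred _
        rcases eq_or_ne i k with rfl | hik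
        · rw [hD1, swapT_j, red_swap hccH hbH]; exact hred _
        · rw [hD1, swapT_k hij hik]; exact hred _
      have hD10 : D1 0 = B 0 := swapT_k h0j h0k
      have hD1j : D1 j = (B j \ {b}) ∪ {cc} := swapT_i hjk
      -- main swap
      have ha2 : b ∈ D1 0 \ D1 j := by
        rw [hD10, hD1j]
        refine ⟨hbB0, ?_⟩
        rintro (h | h)
        · exact h.2 rfl
        · exact hccb (h.symm)
      have hb2 : a ∈ D1 j \ D1 0 := by
        rw [hD10, hD1j]
        exact ⟨Or.inl ⟨haBj, hab.symm ∘ Eq.symm⟩, haB0⟩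
      have hci2 : (((D1 0 \ {b}) ∪ {a}) \ H).ncard ≤ 1 := by
        rw [red_swap hbH haH]; exact (hgD1 0).2.2
      have hcj2 : (((D1 j \ {a}) ∪ {b}) \ H).ncard ≤ 1 := by
        rw [red_swap haH hbH]; exact (hgD1 j).2.2
      set D2 := swapT D1 0 j b a with hD2
      have hgD2 := c.goodT_swapT hgD1 h0j ha2 hb2 hci2 hcj2
      have hUD2 : SameUnion D2 B' := (sameUnion_swapT h0j ha2 hb2).symm.trans hUD1
      have hredD2 : ∀ i, D2 i \ H = B' i \ H := by
        intro i
        rcases eq_or_ne i 0 with rfl | hi0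
        · rw [hD2, swapT_i h0j, red_swap hbH haH]; exact hredD1 _
        rcases eq_or_ne i j with rfl | hij
        · rw [hD2, swapT_j, red_swap haH hbH]; exact hredD1 _
        · rw [hD2, swapT_k hi0 hij]; exact hredD1 _
      have hmlt : (B' 0 \ D2 0).ncard < m := by
        rw [hD2, swapT_i h0j, hD10, target_diff hbB'0,
          Set.ncard_diff_singleton_of_mem (show a ∈ B' 0 \ B 0 from ⟨ha0, haB0⟩)]
        omega
      obtain ⟨C, hconn, hrest⟩ := IH _ hmlt _ hgD2 hUD2 hredD2 rfl
      exact ⟨C, ((c.conn_swapT hg hjk ha1 hb1 hci1 hcj1).trans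
        (c.conn_swapT hgD1 h0j ha2 hb2 hci2 hcj2)).trans hconn, hrest⟩
    · -- Case 2b : `B k \ B j` is a red singleton; swap directly between 0 and k
      push_neg at hcase2
      obtain ⟨cc, hccBk, hccBj⟩ : (B k \ B j).Nonempty :=
        diff_nonempty' (c.good_finite (hg k)) (c.good_finite (hg j))
          (by rw [(hg k).2.1, (hg j).2.1]) ⟨b, hbBj, hbBk⟩
      have hccH : cc ∉ H := hcase2 cc hccBk hccBj
      have hsingle : B k \ B j = {cc} := by
        rw [Set.eq_singleton_iff_unique_mem]
        refine ⟨⟨hccBk, hccBj⟩, fun y hy => ?_⟩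
        exact (Set.ncard_le_one ((c.good_finite (hg k)).diff)).1 (hg k).2.2 y
          ⟨hy.1, hcase2 y hy.1 hy.2⟩ cc ⟨hccBk, hccH⟩
      have hBjBk : B j \ B k = {b} := by
        have h1 : (B j \ B k).ncard = 1 := by
          rw [(Set.ncard_eq_ncard_iff_ncard_diff_eq_ncard_diff (c.good_finite (hg j))
            (c.good_finite (hg k))).1 (by rw [(hg j).2.1, (hg k).2.1]), hsingle,
            Set.ncard_singleton]
        obtain ⟨x, hx⟩ := Set.ncard_eq_one.1 h1
        have hbx : b = x := by
          have : b ∈ B j \ B k := ⟨hbBj, hbBk⟩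
          rw [hx] at this; exact this
        rw [hx, ← hbx]
      have haBk : a ∈ B k := by
        by_contra hcon
        have : a ∈ B j \ B k := ⟨haBj, hcon⟩
        rw [hBjBk] at this
        exact hab this
      have ha_ : b ∈ B 0 \ B k := ⟨hbB0, hbBk⟩
      have hb_ : a ∈ B k \ B 0 := ⟨haBk, haB0⟩
      have hci : (((B 0 \ {b}) ∪ {a}) \ H).ncard ≤ 1 := by
        rw [red_swap hbH haH]; exact (hg 0).2.2
      have hcj : (((B k \ {a}) ∪ {b}) \ H).ncard ≤ 1 := by
        rw [red_swap haH hbH]; exact (hg k).2.2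
      have hgD := c.goodT_swapT hg h0k ha_ hb_ hci hcj
      have hUD : SameUnion (swapT B 0 k b a) B' :=
        (sameUnion_swapT h0k ha_ hb_).symm.trans hU
      have hredD : ∀ i, swapT B 0 k b a i \ H = B' i \ H := by
        intro i
        rcases eq_or_ne i 0 with rfl | hi0
        · rw [swapT_i h0k, red_swap hbH haH]; exact hred _
        rcases eq_or_ne i k with rfl | hik
        · rw [swapT_j, red_swap haH hbH]; exact hred _
        · rw [swapT_k hi0 hik]; exact hred _
      have hmlt : (B' 0 \ swapT B 0 k b a 0).ncard < m := by
        rw [swapT_i h0k, target_diff hbB'0,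
          Set.ncard_diff_singleton_of_mem (show a ∈ B' 0 \ B 0 from ⟨ha0, haB0⟩)]
        omega
      obtain ⟨C, hconn, hrest⟩ := IH _ hmlt _ hgD hUD hredD rfl
      exact ⟨C, (c.conn_swapT hg h0k ha_ hb_ hci hcj).trans hconn, hrest⟩

end Phase2

section Outer

variable {M Mt : Matroid α} {r : ℕ} {H : Set α}

open Classical in
lemma cnt_card_succ {n : ℕ} {e : α} (C : Fin (n + 1) → Set α) :
    (cnt e C).card = (if e ∈ C 0 then 1 else 0) + (cnt e (Fin.tail C)).card := by
  classical
  unfold cnt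
  rw [Finset.card_filter, Finset.card_filter, Fin.sum_univ_succ]
  simp [Fin.tail]
  rw [Finset.card_filter]
  congr! 1

lemma sameUnion_tail {n : ℕ} {C B' : Fin (n + 1) → Set α} (hU : SameUnion C B')
    (h0 : C 0 = B' 0) : SameUnion (Fin.tail C) (Fin.tail B') := by
  rw [sameUnion_iff_cnt]
  intro e
  have h1 := (sameUnion_iff_cnt.1 hU) e
  rw [cnt_card_succ C, cnt_card_succ B', h0] at h1
  omega

lemma conn_cons {n : ℕ} {D D' : Fin n → Set α} {X : Set α} (hX : Good M r H X)
    (h : Conn M Mt r H D D') :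
    Conn M Mt r H (Fin.cons X D) (Fin.cons X D') := by
  induction h with
  | refl => exact Relation.ReflTransGen.refl
  | tail _ hstep ih =>
    rename_i D1 D2 _
    refine ih.tail ?_
    obtain ⟨⟨i, j, hij, a, b, ha, hb, hvi, hvj, hbi, hbj, hrest⟩, hgood⟩ := hstep
    refine ⟨⟨i.succ, j.succ, fun hc => hij (Fin.succ_injective _ hc), a, b, ?_, ?_, ?_, ?_,
      ?_, ?_, ?_⟩, ?_⟩
    · simpa [Fin.cons_succ] using ha
    · simpa [Fin.cons_succ] using hb
    · simpa [Fin.cons_succ] using hvi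
    · simpa [Fin.cons_succ] using hvj
    · simpa [Fin.cons_succ] using hbi
    · simpa [Fin.cons_succ] using hbj
    · intro k hki hkj
      induction k using Fin.cases with
      | zero => simp [Fin.cons_zero]
      | succ m =>
        simp only [Fin.cons_succ]
        exact hrest m (fun hc => hki (hc ▸ rfl)) (fun hc => hkj (hc ▸ rfl))
    · intro k
      induction k using Fin.cases with
      | zero => simpa [Fin.cons_zero] using hX
      | succ m => simpa [Fin.cons_succ] using hgood m

lemma Ctx.phase2 (c : Ctx M Mt r H) :
    ∀ (n : ℕ) (B B' : Fin n → Set α), GoodT M r H B → GoodT M r H B' →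
      SameUnion B B' → (∀ i, B i \ H = B' i \ H) → Conn M Mt r H B B' := by
  intro n
  induction n with
  | zero =>
    intro B B' _ _ _ _
    have : B = B' := funext fun i => i.elim0
    rw [this]
    exact Relation.ReflTransGen.refl
  | succ n ih =>
    intro B B' hg hg' hU hred
    obtain ⟨C, hBC, hgC, hUC, hredC, hC0⟩ := c.fix0 hg' _ B hg hU hred rfl
    have htail : Conn M Mt r H (Fin.tail C) (Fin.tail B') :=
      ih _ _ (fun i => hgC i.succ) (fun i => hg' i.succ) (sameUnion_tail hUC hC0)
        (fun i => hredC i.succ)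
    have hlift := conn_cons (M := M) (Mt := Mt) (r := r) (hgC 0) htail
    rw [Fin.cons_self_tail] at hlift
    have h2 : Fin.cons (C 0) (Fin.tail B') = B' := by
      rw [hC0, Fin.cons_self_tail]
    rw [h2] at hlift
    exact hBC.trans hlift

/-- Convert good-connectivity into an explicit exchange sequence. -/
lemma conn_to_seq {n : ℕ} {B B' : Fin n → Set α} (hg : GoodT M r H B)
    (h : Conn M Mt r H B B') :
    ∃ (ℓ : ℕ) (seq : Fin (ℓ + 1) → Fin n → Set α),
      seq 0 = B ∧ seq (Fin.last ℓ) = B' ∧ IsExchSeq Mt seq ∧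
      ∀ (u : Fin (ℓ + 1)) (i : Fin n), Good M r H (seq u i) := by
  induction h with
  | refl => exact ⟨0, fun _ => B, rfl, rfl, fun t => t.elim0, fun _ i => hg i⟩
  | tail _ hstep ih =>
    rename_i C B'' _
    obtain ⟨ℓ, f, h0, hlast, hseq, hgood⟩ := ih
    refine ⟨ℓ + 1, Fin.snoc f B'', ?_, ?_, ?_, ?_⟩
    · rw [show (0 : Fin (ℓ + 2)) = Fin.castSucc 0 from rfl, Fin.snoc_castSucc, h0]
    · rw [Fin.snoc_last]
    · intro t
      induction t using Fin.lastCases with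
      | last =>
        rw [Fin.succ_last, Fin.snoc_last, Fin.snoc_castSucc, hlast]
        exact hstep.1
      | cast m =>
        rw [Fin.succ_castSucc, Fin.snoc_castSucc, Fin.snoc_castSucc]
        exact hseq m
    · intro u i
      induction u using Fin.lastCases with
      | last => rw [Fin.snoc_last]; exact hstep.2 i
      | cast v => rw [Fin.snoc_castSucc]; exact hgood v i

end Outer







/-- Two tuples of size-`r` subsets of type at most 1 with the same multiset union are
connected by an exchange sequence in the relaxation `Mt` all of whose subsets have type
at most 1. -/
theorem type_le_one_exchange (M Mt : Matroid α) (r : ℕ) (H : Set α)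
    (hfin : M.E.Finite) (hr : HasRank M r) (hH : IsStressedP M r H)
    (hHcard : r ≤ H.ncard) (hrel : IsRelaxation M Mt r H)
    (n : ℕ) (B B' : Fin n → Set α)
    (hB : ∀ i, B i ⊆ M.E ∧ (B i).ncard = r ∧ ((B i) \ H).ncard ≤ 1)
    (hB' : ∀ i, B' i ⊆ M.E ∧ (B' i).ncard = r ∧ ((B' i) \ H).ncard ≤ 1)
    (hU : SameUnion B B') :
    ∃ (ℓ : ℕ) (seq : Fin (ℓ + 1) → Fin n → Set α),
      seq 0 = B ∧ seq (Fin.last ℓ) = B' ∧ IsExchSeq Mt seq ∧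
      ∀ (u : Fin (ℓ + 1)) (i : Fin n), ((seq u i) \ H).ncard ≤ 1 := by
  have c : Ctx M Mt r H := ⟨hfin, hr, hH, hHcard, hrel⟩
  have hg : GoodT M r H B := fun i => hB i
  have hg' : GoodT M r H B' := fun i => hB' i
  obtain ⟨C, hBC, hgC, hUC, hredC⟩ := c.phase1 hg' _ B hg hU rfl
  have hconn := hBC.trans (c.phase2 n C B' hgC hg' hUC hredC)
  obtain ⟨ℓ, seq, h0, hlast, hseq, hgood⟩ := conn_to_seq hg hconn
  exact ⟨ℓ, seq, h0, hlast, hseq, fun u i => (hgood u i).2.2⟩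

end WhitePaving
end
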